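/- arXiv:1811.02452 — 9 statements merged into one kernel-verified Lean document; each statement's English description precedes it below -/
import Mathlib

section
/- Let p be a prime, let k ≥ 2, let χ be a primitive Dirichlet character modulo p^k, and let a be an integer. Then ∑_{t ∈ ℤ/p^kℤ, t ≡ a (mod p)} χ(t) · conj(χ)(t+1) = 0. -/
/-!
Put `ε = p ^ (k - 1)`. Since `ε² = 0` and `p ε = 0`, the map `ψ x = χ (1 + x ε)` is an additive
character depending only on `x mod p`, and `χ (t + t y ε) = χ t ψ y`. Primitivity makes `ψ`
nontrivial, say `ψ x ≠ 1`. Translating `t` by `a (a + 1) x ε` preserves the class `t ≡ a (mod p)`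
and multiplies `χ t` by `ψ ((a + 1) x)` and `conj (χ (t + 1))` by `ψ (-a x)`, so the sum is
multiplied by `ψ x ≠ 1` and must vanish.
-/

open DirichletCharacter

lemma Fintype.sum_eq_zero_of_map_add_right_eq_mul {G K : Type*} [AddGroup G] [Fintype G] [Ring K]
    [NoZeroDivisors K] {f : G → K} {δ : G} {c : K} (hc : c ≠ 1) (hf : ∀ t, f (t + δ) = c * f t) :
    ∑ t, f t = 0 := by
  have hsum : ∑ t, f t = c * ∑ t, f t := by
    rw [Finset.mul_sum, ← Equiv.sum_comp (Equiv.addRight δ)]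
    exact Finset.sum_congr rfl fun t _ => hf t
  have h : (1 - c) * ∑ t, f t = 0 := by rw [sub_mul, one_mul, ← hsum, sub_self]
  exact (mul_eq_zero.mp h).resolve_left (sub_ne_zero.mpr hc.symm)

namespace ZMod

lemma natCast_dvd_of_castHom_eq_zero {d n : ℕ} [NeZero n] (hd : d ∣ n) {z : ZMod n}
    (hz : castHom hd (ZMod d) z = 0) : (d : ZMod n) ∣ z := by
  rw [← natCast_zmod_val z, map_natCast, natCast_eq_zero_iff] at hz
  obtain ⟨m, hm⟩ := hz
  exact ⟨m, by rw [← natCast_zmod_val z, hm, Nat.cast_mul]⟩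

lemma intCast_dvd_val_sub_iff {d n : ℕ} [NeZero n] (hd : d ∣ n) (t : ZMod n) (a : ℤ) :
    (d : ℤ) ∣ (t.val : ℤ) - a ↔ castHom hd (ZMod d) t = a := by
  rw [← intCast_zmod_eq_zero_iff_dvd, Int.cast_sub, sub_eq_zero, Int.cast_natCast,
    ← map_natCast (castHom hd (ZMod d)), natCast_zmod_val]

variable {p k : ℕ}

lemma natCast_pow_self_eq_zero : (p : ZMod (p ^ k)) ^ k = 0 := by
  rw [← Nat.cast_pow, natCast_self]

lemma natCast_pow_pred_sq_eq_zero (hk : 2 ≤ k) : ((p : ZMod (p ^ k)) ^ (k - 1)) ^ 2 = 0 := by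
  rw [← pow_mul]
  exact pow_eq_zero_of_le (by omega) natCast_pow_self_eq_zero

lemma mul_natCast_pow_pred_eq_of_dvd_sub (hk : k ≠ 0) {s t : ZMod (p ^ k)}
    (h : (p : ZMod (p ^ k)) ∣ s - t) :
    s * (p : ZMod (p ^ k)) ^ (k - 1) = t * (p : ZMod (p ^ k)) ^ (k - 1) := by
  obtain ⟨m, hm⟩ := h
  rw [← sub_eq_zero, ← sub_mul, hm, mul_right_comm, ← pow_succ',
    Nat.sub_add_cancel (Nat.one_le_iff_ne_zero.mpr hk), natCast_pow_self_eq_zero, zero_mul]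

end ZMod

namespace MulChar

variable {R M : Type*} [CommRing R] [CommMonoidWithZero M]

def addCharOfSqEqZero (χ : MulChar R M) (ε : R) (hε : ε ^ 2 = 0) : AddChar R M where
  toFun x := χ (1 + x * ε)
  map_zero_eq_one' := by rw [zero_mul, add_zero, map_one]
  map_add_eq_mul' x y := by
    rw [← map_mul]
    congr 1
    linear_combination (-(x * y)) * hε

lemma addCharOfSqEqZero_apply (χ : MulChar R M) {ε : R} (hε : ε ^ 2 = 0) (x : R) :
    χ.addCharOfSqEqZero ε hε x = χ (1 + x * ε) := rfl

lemma apply_add_mul_mul_of_mul_eq (χ : MulChar R M) {ε s t : R} (hst : s * ε = t * ε) (y : R) :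
    χ (t + s * y * ε) = χ t * χ (1 + y * ε) := by
  rw [← map_mul, mul_right_comm, hst]
  ring_nf

lemma apply_shift_mul_conj_apply_add_one {p k : ℕ} [NeZero p] (hk : 2 ≤ k) (χ : MulChar (ZMod (p ^ k)) ℂ)
    {s t : ZMod (p ^ k)} (hst : (p : ZMod (p ^ k)) ∣ s - t) (x : ZMod (p ^ k)) :
    χ (t + s * (s + 1) * x * p ^ (k - 1)) *
        (starRingEnd ℂ) (χ (t + s * (s + 1) * x * p ^ (k - 1) + 1)) =
      χ.addCharOfSqEqZero _ (ZMod.natCast_pow_pred_sq_eq_zero hk) x *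
        (χ t * (starRingEnd ℂ) (χ (t + 1))) := by
  set ψ := χ.addCharOfSqEqZero _ (ZMod.natCast_pow_pred_sq_eq_zero hk)
  have hk0 : k ≠ 0 := by omega
  have h₀ : χ (t + s * (s + 1) * x * p ^ (k - 1)) = χ t * ψ ((s + 1) * x) := by
    rw [addCharOfSqEqZero_apply, ← χ.apply_add_mul_mul_of_mul_eq
      (ZMod.mul_natCast_pow_pred_eq_of_dvd_sub hk0 hst), mul_assoc s]
  have h₁ : χ (t + s * (s + 1) * x * p ^ (k - 1) + 1) = χ (t + 1) * ψ (s * x) := by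
    rw [addCharOfSqEqZero_apply, ← χ.apply_add_mul_mul_of_mul_eq
      (ZMod.mul_natCast_pow_pred_eq_of_dvd_sub hk0 (s := s + 1) (t := t + 1)
        (by rwa [add_sub_add_right_eq_sub]))]
    ring_nf
  rw [h₀, h₁, map_mul (starRingEnd ℂ), ← AddChar.map_neg_eq_conj]
  calc χ t * ψ ((s + 1) * x) * ((starRingEnd ℂ) (χ (t + 1)) * ψ (-(s * x)))
      = ψ ((s + 1) * x + -(s * x)) * (χ t * (starRingEnd ℂ) (χ (t + 1))) := by
        rw [AddChar.map_add_eq_mul]; ring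
    _ = ψ x * (χ t * (starRingEnd ℂ) (χ (t + 1))) := by ring_nf

end MulChar

/-- Units `u ≡ 1 (mod p ^ (k - 1))` are exactly the `1 + x p ^ (k - 1)`; if `χ` were trivial on
them it would factor through level `p ^ (k - 1)`. -/
lemma DirichletCharacter.IsPrimitive.exists_apply_one_add_mul_ne_one {R : Type*}
    [CommMonoidWithZero R] {p k : ℕ} [Fact p.Prime] (hk : k ≠ 0) {χ : DirichletCharacter R (p ^ k)}
    (hχ : χ.IsPrimitive) : ∃ x, χ (1 + x * (p : ZMod (p ^ k)) ^ (k - 1)) ≠ 1 := by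
  by_contra! h
  have hdvd : p ^ (k - 1) ∣ p ^ k := pow_dvd_pow p (Nat.sub_le k 1)
  have hft : χ.FactorsThrough (p ^ (k - 1)) := by
    refine (factorsThrough_iff_ker_unitsMap hdvd).mpr fun u hu => ?_
    obtain ⟨m, hm⟩ := ZMod.natCast_dvd_of_castHom_eq_zero hdvd (z := (u : ZMod (p ^ k)) - 1)
      (by rw [map_sub, map_one, sub_eq_zero]; exact congrArg Units.val hu)
    rw [MonoidHom.mem_ker]
    ext
    rw [MulChar.coe_toUnitHom, Units.val_one, ← h m, mul_comm, ← Nat.cast_pow, ← hm,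
      add_sub_cancel]
  have hle : p ^ k ≤ p ^ (k - 1) := hχ ▸ Nat.sInf_le ((mem_conductorSet_iff χ).mpr hft)
  exact hle.not_gt (Nat.pow_lt_pow_right (Fact.out : p.Prime).one_lt (by omega))

/-- Let p be prime, k ≥ 2, χ a primitive Dirichlet character modulo p^k, and a an integer.
Then ∑_{t ∈ ℤ/p^kℤ, t ≡ a (mod p)} χ(t) · conj(χ)(t+1) = 0. -/
theorem sum_char_LFT_arith_prog (p : ℕ) [Fact p.Prime] (k : ℕ) (hk : 2 ≤ k)
    (χ : DirichletCharacter ℂ (p ^ k)) (hχ : χ.IsPrimitive) (a : ℤ) :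
    ∑ t : ZMod (p ^ k),
      (if (p : ℤ) ∣ ((t.val : ℤ) - a) then χ t * (starRingEnd ℂ) (χ (t + 1)) else 0) = 0 := by
  have hk0 : k ≠ 0 := by omega
  obtain ⟨x, hx⟩ := hχ.exists_apply_one_add_mul_ne_one hk0
  refine Fintype.sum_eq_zero_of_map_add_right_eq_mul (δ := a * (a + 1) * x * p ^ (k - 1)) hx
    fun t => ?_
  have hδ : ZMod.castHom (dvd_pow_self p hk0) (ZMod p) (a * (a + 1) * x * p ^ (k - 1)) = 0 := by
    rw [map_mul, map_pow, map_natCast, ZMod.natCast_self, zero_pow (by omega), mul_zero]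
  simp only [ZMod.intCast_dvd_val_sub_iff (dvd_pow_self p hk0), map_add, hδ, add_zero]
  split_ifs with hta
  · refine χ.apply_shift_mul_conj_apply_add_one hk
      (ZMod.natCast_dvd_of_castHom_eq_zero (dvd_pow_self p hk0) ?_) x
    rw [map_sub, hta, map_intCast, sub_self]
  · rw [mul_zero]
end

section
/- Let χ be a primitive Dirichlet character modulo q and let a, b, c, d be integers with gcd(a, c, q) = 1. Then ∑_{t ∈ ℤ/qℤ} χ(a·t + b) · conj(χ)(c·t + d) = χ(a) · conj(χ)(c) · R_q(a·d − b·c). -/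
/-- e_q(x) = exp(2πi x / q). -/
noncomputable def eN (q : ℕ) (x : ℤ) : ℂ :=
  Complex.exp (2 * Real.pi * Complex.I * x / q)

/-- The Ramanujan sum R_q(n) = ∑_{y ∈ (ℤ/qℤ)ˣ} e_q(n·ỹ). -/
noncomputable def ramanujanSum (q : ℕ) [NeZero q] (n : ℤ) : ℂ :=
  ∑ y : (ZMod q)ˣ, eN q (n * (((y : ZMod q)).val : ℤ))


open Finset DirichletCharacter AddChar

variable {q : ℕ} [NeZero q]

lemma conj_eq_inv (χ : DirichletCharacter ℂ q) (x : ZMod q) :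
    (starRingEnd ℂ) (χ x) = χ⁻¹ x := by
  rw [MulChar.inv_apply_eq_inv' χ x]
  by_cases hx : IsUnit x
  · have h1 : ‖χ x‖ = 1 := by
      simpa using χ.unit_norm_eq_one hx.unit
    rw [Complex.inv_eq_conj h1]
  · simp [χ.map_nonunit hx]

lemma isPrimitive_inv {χ : DirichletCharacter ℂ q} (hχ : χ.IsPrimitive) :
    χ⁻¹.IsPrimitive := by
  have h : χ.FactorsThrough χ⁻¹.conductor := by
    obtain ⟨hd, χ₀, hχ₀⟩ := χ⁻¹.factorsThrough_conductor
    exact ⟨hd, χ₀⁻¹, by rw [map_inv, ← hχ₀, inv_inv]⟩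
  have h1 : χ.conductor ≤ χ⁻¹.conductor := Nat.sInf_le h
  have h2 : χ⁻¹.conductor ≤ q :=
    Nat.le_of_dvd (NeZero.pos q) (conductor_dvd_level _)
  exact le_antisymm h2 (le_trans (le_of_eq hχ.symm) h1)

lemma expand_aux (χ' : DirichletCharacter ℂ q) (hp : χ'.IsPrimitive) (m : ZMod q) :
    χ'⁻¹ m * gaussSum χ' ZMod.stdAddChar
      = ∑ x : ZMod q, χ' x * ZMod.stdAddChar (m * x) := by
  rw [← gaussSum_mulShift_of_isPrimitive ZMod.stdAddChar hp m]
  simp [gaussSum, AddChar.mulShift_apply]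

lemma kernel_sum (A C u v : ZMod q) (huv : A*u + C*v = 1) (f : ZMod q → ZMod q → ℂ) :
    ∑ p : ZMod q × ZMod q, (if A * p.1 + C * p.2 = 0 then f p.1 p.2 else 0)
      = ∑ s : ZMod q, f (C*s) (-(A*s)) := by
  classical
  rw [← Finset.sum_filter]
  refine Finset.sum_nbij' (i := fun p => v * p.1 - u * p.2)
    (j := fun s => (C*s, -(A*s))) ?_ ?_ ?_ ?_ ?_
  · intro p hp; exact Finset.mem_univ _
  · intro s hs
    simp only [Finset.mem_filter, Finset.mem_univ, true_and]
    ring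
  · intro p hp
    simp only [Finset.mem_filter, Finset.mem_univ, true_and] at hp
    obtain ⟨x, y⟩ := p
    simp only [Prod.mk.injEq] at hp ⊢
    constructor
    · linear_combination x * huv - u * hp
    · linear_combination y * huv - v * hp
  · intro s hs
    simp only
    linear_combination s * huv
  · intro p hp
    simp only [Finset.mem_filter, Finset.mem_univ, true_and] at hp
    obtain ⟨x, y⟩ := p
    simp only at hp ⊢
    have h1 : C * (v * x - u * y) = x := by linear_combination x * huv - u * hp
    have h2 : -(A * (v * x - u * y)) = y := by linear_combination y * huv - v * hp
    rw [h1, h2]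

lemma sum_units_eq (g : ZMod q → ℂ) :
    ∑ s : ZMod q, (if IsUnit s then g s else 0) = ∑ u : (ZMod q)ˣ, g u := by
  classical
  rw [← Finset.sum_filter]
  refine (Finset.sum_bij (fun (u : (ZMod q)ˣ) _ => (u : ZMod q)) ?_ ?_ ?_ ?_).symm
  · intro u _; simp [u.isUnit]
  · intro u _ u' _ huu'; exact Units.ext huu'
  · intro s hs
    simp only [Finset.mem_filter, Finset.mem_univ, true_and] at hs
    exact ⟨hs.unit, Finset.mem_univ _, rfl⟩
  · intro u _; rfl

lemma ram_eq (n : ℤ) :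
    ramanujanSum q n = ∑ s : (ZMod q)ˣ, ZMod.stdAddChar ((n : ZMod q) * (s : ZMod q)) := by
  unfold ramanujanSum eN
  refine Finset.sum_congr rfl fun y _ => ?_
  rw [← ZMod.stdAddChar_coe]
  congr 1
  push_cast
  simp [ZMod.natCast_val, ZMod.cast_id]

lemma ram_neg (n : ℤ) :
    ∑ s : (ZMod q)ˣ, ZMod.stdAddChar (((-n : ℤ) : ZMod q) * (s : ZMod q))
      = ramanujanSum q n := by
  rw [ram_eq]
  refine Fintype.sum_equiv (Equiv.mulLeft ⟨(-1 : ZMod q), -1, by simp, by simp⟩) _ _ fun s => ?_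
  simp only [Equiv.coe_mulLeft, Units.val_mul]
  push_cast
  ring_nf

lemma inv_mul_apply (χ : DirichletCharacter ℂ q) (s : ZMod q) :
    χ⁻¹ s * χ s = if IsUnit s then (1 : ℂ) else 0 := by
  rw [← MulChar.mul_apply, MulChar.inv_mul]
  by_cases hs : IsUnit s
  · rw [MulChar.one_apply hs, if_pos hs]
  · rw [MulChar.map_nonunit _ hs, if_neg hs]

lemma key (χ : DirichletCharacter ℂ q) (hχ : χ.IsPrimitive) (a b c d : ℤ)
    (h : Int.gcd a (Int.gcd c (q : ℤ)) = 1) :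
    gaussSum χ⁻¹ ZMod.stdAddChar * gaussSum χ ZMod.stdAddChar *
      ∑ t : ZMod q, χ ((a : ZMod q) * t + (b : ZMod q)) * χ⁻¹ ((c : ZMod q) * t + (d : ZMod q))
    = q * χ (-1) * (χ (a : ZMod q) * χ⁻¹ (c : ZMod q) * ramanujanSum q (a * d - b * c)) := by
  obtain ⟨u, v, huv⟩ : ∃ u v : ZMod q, (a : ZMod q) * u + (c : ZMod q) * v = 1 := by
    have h1 : IsCoprime (a : ℤ) (Int.gcd c (q : ℤ) : ℤ) := Int.isCoprime_iff_gcd_eq_one.mpr h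
    obtain ⟨x, y, hxy⟩ := h1
    have h2 : (Int.gcd c (q : ℤ) : ℤ) = c * Int.gcdA c q + q * Int.gcdB c q :=
      Int.gcd_eq_gcd_ab c q
    refine ⟨(x : ZMod q), ((y * Int.gcdA c (q : ℤ) : ℤ) : ZMod q), ?_⟩
    have h3 : ((x * a + y * (c * Int.gcdA c q + q * Int.gcdB c q) : ℤ) : ZMod q) = 1 := by
      rw [← h2, hxy]; simp
    push_cast [ZMod.natCast_self] at h3 ⊢
    linear_combination h3
  set ψ : AddChar (ZMod q) ℂ := ZMod.stdAddChar with hψdef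
  have hψ : ψ.IsPrimitive := ZMod.isPrimitive_stdAddChar q
  have hinv := isPrimitive_inv hχ
  have e1 : ∀ m : ZMod q, χ m * gaussSum χ⁻¹ ψ = ∑ x : ZMod q, χ⁻¹ x * ψ (m * x) := by
    intro m; have := expand_aux χ⁻¹ hinv m; rwa [inv_inv] at this
  have e2 : ∀ m : ZMod q, χ⁻¹ m * gaussSum χ ψ = ∑ y : ZMod q, χ y * ψ (m * y) :=
    expand_aux χ hχ
  set A := (a : ZMod q); set B := (b : ZMod q); set C := (c : ZMod q); set D := (d : ZMod q)
  calc gaussSum χ⁻¹ ψ * gaussSum χ ψ * ∑ t : ZMod q, χ (A * t + B) * χ⁻¹ (C * t + D)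
      = ∑ t : ZMod q, (χ (A * t + B) * gaussSum χ⁻¹ ψ) * (χ⁻¹ (C * t + D) * gaussSum χ ψ) := by
        rw [Finset.mul_sum]; exact Finset.sum_congr rfl fun t _ => by ring
    _ = ∑ t : ZMod q, (∑ x : ZMod q, χ⁻¹ x * ψ ((A * t + B) * x)) *
          (∑ y : ZMod q, χ y * ψ ((C * t + D) * y)) :=
        Finset.sum_congr rfl fun t _ => by rw [e1, e2]
    _ = ∑ t : ZMod q, ∑ x : ZMod q, ∑ y : ZMod q,
          (χ⁻¹ x * χ y) * ψ (t * (A * x + C * y) + (B * x + D * y)) := by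
        refine Finset.sum_congr rfl fun t _ => ?_
        rw [Finset.sum_mul_sum]
        refine Finset.sum_congr rfl fun x _ => Finset.sum_congr rfl fun y _ => ?_
        rw [show t * (A * x + C * y) + (B * x + D * y)
              = (A * t + B) * x + (C * t + D) * y by ring, map_add_eq_mul]
        ring
    _ = ∑ x : ZMod q, ∑ y : ZMod q,
          ((χ⁻¹ x * χ y) * ψ (B * x + D * y)) * ∑ t : ZMod q, ψ (t * (A * x + C * y)) := by
        rw [Finset.sum_comm]
        refine Finset.sum_congr rfl fun x _ => ?_
        rw [Finset.sum_comm]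
        refine Finset.sum_congr rfl fun y _ => ?_
        rw [Finset.mul_sum]
        refine Finset.sum_congr rfl fun t _ => ?_
        rw [map_add_eq_mul]; ring
    _ = ∑ x : ZMod q, ∑ y : ZMod q, ((χ⁻¹ x * χ y) * ψ (B * x + D * y)) *
          (if A * x + C * y = 0 then (q : ℂ) else 0) := by
        refine Finset.sum_congr rfl fun x _ => Finset.sum_congr rfl fun y _ => ?_
        rw [AddChar.sum_mulShift _ hψ]
        simp [ZMod.card]
    _ = (q : ℂ) * ∑ p : ZMod q × ZMod q,
          (if A * p.1 + C * p.2 = 0 then (χ⁻¹ p.1 * χ p.2) * ψ (B * p.1 + D * p.2) else 0) := by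
        rw [Finset.mul_sum, ← Finset.univ_product_univ, Finset.sum_product]
        refine Finset.sum_congr rfl fun x _ => Finset.sum_congr rfl fun y _ => ?_
        by_cases hxy : A * x + C * y = 0 <;> simp [hxy] <;> ring
    _ = (q : ℂ) * ∑ s : ZMod q, (χ⁻¹ (C * s) * χ (-(A * s))) * ψ (B * (C * s) + D * (-(A * s))) := by
        rw [kernel_sum A C u v huv (fun x y => χ⁻¹ x * χ y * ψ (B * x + D * y))]
    _ = (q : ℂ) * ((χ (-1) * (χ A * χ⁻¹ C)) *
          ∑ s : ZMod q, (if IsUnit s then ψ ((B * C - A * D) * s) else 0)) := by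
        congr 1
        rw [Finset.mul_sum]
        refine Finset.sum_congr rfl fun s _ => ?_
        have harg : B * (C * s) + D * (-(A * s)) = (B * C - A * D) * s := by ring
        have hneg : (-(A * s)) = (-1) * (A * s) := by ring
        rw [harg, hneg, map_mul χ⁻¹, map_mul χ, map_mul χ]
        rw [show χ⁻¹ C * χ⁻¹ s * (χ (-1) * (χ A * χ s))
              = (χ (-1) * (χ A * χ⁻¹ C)) * (χ⁻¹ s * χ s) by ring, inv_mul_apply]
        by_cases hs : IsUnit s <;> simp [hs]
    _ = (q : ℂ) * ((χ (-1) * (χ A * χ⁻¹ C)) * ∑ w : (ZMod q)ˣ, ψ ((B * C - A * D) * w)) := by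
        rw [sum_units_eq]
    _ = q * χ (-1) * (χ A * χ⁻¹ C * ramanujanSum q (a * d - b * c)) := by
        have harg : (B * C - A * D : ZMod q) = ((-(a * d - b * c) : ℤ) : ZMod q) := by
          simp only [A, B, C, D]; push_cast; ring
        rw [harg, ram_neg]; ring

lemma ram_zero : ramanujanSum q 0 = (Nat.totient q : ℂ) := by
  unfold ramanujanSum eN
  simp [ZMod.card_units_eq_totient]

lemma gauss_prod (χ : DirichletCharacter ℂ q) (hχ : χ.IsPrimitive) :
    gaussSum χ⁻¹ ZMod.stdAddChar * gaussSum χ ZMod.stdAddChar = q * χ (-1) := by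
  have htot : (Nat.totient q : ℂ) ≠ 0 :=
    Nat.cast_ne_zero.mpr (Nat.totient_pos.mpr (NeZero.pos q)).ne'
  have hsum : ∑ t : ZMod q, χ t * χ⁻¹ t = (Nat.totient q : ℂ) := by
    have h1 : ∀ t : ZMod q, χ t * χ⁻¹ t = if IsUnit t then (1 : ℂ) else 0 := by
      intro t; rw [mul_comm]; exact inv_mul_apply χ t
    rw [Finset.sum_congr rfl fun t _ => h1 t, sum_units_eq (fun _ => (1 : ℂ))]
    simp [ZMod.card_units_eq_totient]
  have K0 := key χ hχ 1 0 1 0 (by simp)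
  simp only [Int.cast_one, Int.cast_zero, one_mul, add_zero, map_one, mul_one, mul_zero,
    sub_zero, zero_mul, sub_self] at K0
  rw [hsum, ram_zero] at K0
  exact mul_right_cancel₀ htot K0


/-- If χ is primitive modulo q and gcd(a,c,q) = 1, then
∑_{t ∈ ℤ/qℤ} χ(at+b)·conj(χ)(ct+d) = χ(a)·conj(χ)(c)·R_q(ad−bc). -/
theorem char_sum_linear_fractional {q : ℕ} [NeZero q]
    (χ : DirichletCharacter ℂ q) (hχ : χ.IsPrimitive)
    (a b c d : ℤ) (h : Int.gcd a (Int.gcd c (q : ℤ)) = 1) :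
    ∑ t : ZMod q,
        χ ((a : ZMod q) * t + (b : ZMod q)) *
          (starRingEnd ℂ) (χ ((c : ZMod q) * t + (d : ZMod q))) =
      χ (a : ZMod q) * (starRingEnd ℂ) (χ (c : ZMod q)) * ramanujanSum q (a * d - b * c) := by
  simp only [conj_eq_inv]
  have hne : (q : ℂ) * χ (-1) ≠ 0 := by
    refine mul_ne_zero (Nat.cast_ne_zero.mpr (NeZero.ne q)) ?_
    have hu : IsUnit (-1 : ZMod q) := IsUnit.neg isUnit_one
    intro h0
    have := χ.unit_norm_eq_one hu.unit
    rw [IsUnit.unit_spec, h0] at this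
    simp at this
  have K := key χ hχ a b c d h
  rw [gauss_prod χ hχ] at K
  exact mul_left_cancel₀ hne K
end

section
/- Let p be a prime, let χ be a primitive Dirichlet character modulo p², and let ψ be any Dirichlet character modulo p². Then |g(χ, ψ)| ≤ 2·p². -/
/-- g(χ,ψ) = ∑_{t,u ∈ ℤ/qℤ} χ(t)·conj(χ)(t+1)·conj(χ)(u)·χ(u+1)·ψ(ut−1). -/
noncomputable def gSum {q : ℕ} [NeZero q] (χ ψ : DirichletCharacter ℂ q) : ℂ :=
  ∑ t : ZMod q, ∑ u : ZMod q,
    χ t * (starRingEnd ℂ) (χ (t + 1)) * (starRingEnd ℂ) (χ u) * χ (u + 1) * ψ (u * t - 1)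

set_option linter.unusedSectionVars false

noncomputable def piS {p : ℕ} : ZMod (p^2) →+* ZMod p :=
  ZMod.castHom (dvd_pow_self p two_ne_zero) (ZMod p)

section Basics
variable {p : ℕ} [Fact p.Prime]

local notation "S" => ZMod (p^2)

lemma PP : (p : S) * (p : S) = 0 := by
  rw [← Nat.cast_mul, ← pow_two, ZMod.natCast_self]

lemma unit1p (s : S) : (1 + (p:S)*s) * (1 - (p:S)*s) = 1 := by
  linear_combination (-(s*s)) * (PP (p := p))

lemma isUnit1p (s : S) : IsUnit (1 + (p:S)*s) :=
  IsUnit.of_mul_eq_one _ (unit1p s)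

lemma piS_apply (x : S) : piS x = ((x.val : ℕ) : ZMod p) := by
  rw [piS, ZMod.castHom_apply, ← ZMod.natCast_val]

lemma piS_eq_zero_iff (x : S) : piS x = 0 ↔ ∃ z : S, x = (p:S) * z := by
  constructor
  · intro h
    rw [piS_apply, ZMod.natCast_eq_zero_iff] at h
    obtain ⟨m, hm⟩ := h
    refine ⟨(m : S), ?_⟩
    have hx : x = ((x.val : ℕ) : S) := (ZMod.natCast_rightInverse x).symm
    rw [hx, hm]; push_cast; ring
  · rintro ⟨z, rfl⟩
    rw [map_mul]
    have : piS (p : S) = 0 := by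
      rw [map_natCast, ZMod.natCast_self]
    rw [this, zero_mul]

lemma isUnit_iff_piS (x : S) : IsUnit x ↔ piS x ≠ 0 := by
  have hx : x = ((x.val : ℕ) : S) := (ZMod.natCast_rightInverse x).symm
  rw [piS_apply, Ne, ZMod.natCast_eq_zero_iff]
  constructor
  · intro h hdvd
    rw [hx, ZMod.isUnit_iff_coprime] at h
    have hp : p.Prime := Fact.out
    exact (Nat.Prime.coprime_iff_not_dvd hp).mp
      (Nat.Coprime.coprime_dvd_left (dvd_pow_self p two_ne_zero) h.symm) hdvd
  · intro h
    rw [hx, ZMod.isUnit_iff_coprime]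
    have hp : p.Prime := Fact.out
    exact Nat.Coprime.pow_right 2 ((Nat.Prime.coprime_iff_not_dvd hp).mpr h).symm

lemma isUnit_add_p_mul (x z : S) : IsUnit (x + (p:S)*z) ↔ IsUnit x := by
  rw [isUnit_iff_piS, isUnit_iff_piS, map_add, map_mul]
  have : piS (p : S) = 0 := by rw [map_natCast, ZMod.natCast_self]
  rw [this, zero_mul, add_zero]

end Basics

section CharLemmas
variable {p : ℕ} [Fact p.Prime] (χ : DirichletCharacter ℂ (p^2))
local notation "S" => ZMod (p^2)


lemma e_add (x y : S) : χ (1 + (p:S)*(x+y)) = χ (1 + (p:S)*x) * χ (1 + (p:S)*y) := by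
  rw [← map_mul]
  congr 1
  linear_combination (-(x*y)) * (PP (p := p))

lemma e_mul_e_neg (x : S) : χ (1 + (p:S)*x) * χ (1 + (p:S)*(-x)) = 1 := by
  rw [← e_add]
  norm_num

lemma e_abs (x : S) : ‖χ (1 + (p:S)*x)‖ = 1 := by
  have h2 := congrArg (‖·‖) (e_mul_e_neg χ x)
  simp only [norm_mul, norm_one] at h2
  have b1 : ‖χ (1 + (p:S)*x)‖ ≤ 1 := χ.norm_le_one _
  have b2 : ‖χ (1 + (p:S)*(-x))‖ ≤ 1 := χ.norm_le_one _
  nlinarith [norm_nonneg (χ (1 + (p:S)*x)), norm_nonneg (χ (1 + (p:S)*(-x)))]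

lemma conj_e (x : S) : (starRingEnd ℂ) (χ (1 + (p:S)*x)) = χ (1 + (p:S)*(-x)) := by
  have h := e_mul_e_neg χ x
  have h2 : (starRingEnd ℂ) (χ (1 + (p:S)*x)) * χ (1 + (p:S)*x) = 1 := by
    rw [mul_comm, Complex.mul_conj]
    norm_cast
    rw [← Complex.sq_norm, e_abs]
    norm_num
  calc (starRingEnd ℂ) (χ (1 + (p:S)*x))
      = (starRingEnd ℂ) (χ (1 + (p:S)*x)) * (χ (1 + (p:S)*x) * χ (1 + (p:S)*(-x))) := by
        rw [h, mul_one]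
    _ = ((starRingEnd ℂ) (χ (1 + (p:S)*x)) * χ (1 + (p:S)*x)) * χ (1 + (p:S)*(-x)) := by ring
    _ = χ (1 + (p:S)*(-x)) := by rw [h2, one_mul]

end CharLemmas
section CharLemmas2
variable {p : ℕ} [Fact p.Prime] (χ ψ : DirichletCharacter ℂ (p^2))
local notation "S" => ZMod (p^2)

lemma e_congr {a b : S} (h : piS (a - b) = 0) : χ (1 + (p:S)*a) = χ (1 + (p:S)*b) := by
  obtain ⟨z, hz⟩ := (piS_eq_zero_iff _).mp h
  have hab : a = b + (p:S)*z := by linear_combination hz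
  subst hab
  congr 1
  linear_combination z * (PP (p := p))

lemma e_pow (x : S) (n : ℕ) : χ (1 + (p:S)*x) ^ n = χ (1 + (p:S)*((n:S)*x)) := by
  induction n with
  | zero => simp
  | succ n ih =>
    rw [pow_succ, ih, ← e_add]
    congr 2
    push_cast
    ring

lemma e_pow_p (x : S) : χ (1 + (p:S)*x) ^ p = 1 := by
  rw [e_pow]
  have h : (1 : S) + (p:S)*((p:S)*x) = 1 := by
    linear_combination x * (PP (p := p))
  rw [h, map_one]

lemma sum_e (A : S) :
    ∑ s : S, χ (1 + (p:S)*(s*A)) =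
      if (∀ s : S, χ (1 + (p:S)*(s*A)) = 1) then ((p:ℂ)^2) else 0 := by
  haveI : NeZero (p^2) := ⟨pow_ne_zero 2 (Nat.Prime.ne_zero Fact.out)⟩
  split_ifs with h
  · rw [Finset.sum_congr rfl (fun s _ => h s), Finset.sum_const, Finset.card_univ, ZMod.card,
      nsmul_eq_mul, mul_one]
    push_cast
    ring
  · push_neg at h
    obtain ⟨s₀, hs₀⟩ := h
    have key : ∑ s : S, χ (1 + (p:S)*(s*A)) =
        (∑ s : S, χ (1 + (p:S)*(s*A))) * χ (1 + (p:S)*(s₀*A)) := by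
      nth_rewrite 1 [← Fintype.sum_equiv (Equiv.addRight s₀)
        (fun s => χ (1 + (p:S)*((s + s₀)*A))) (fun s => χ (1 + (p:S)*(s*A))), Finset.sum_mul]
      · apply Finset.sum_congr rfl
        intro s _
        have : (s + s₀) * A = s*A + s₀*A := by ring
        rw [this, e_add]
      · intro s
        rfl
    have h2 : (∑ s : S, χ (1 + (p:S)*(s*A))) * (χ (1 + (p:S)*(s₀*A)) - 1) = 0 := by
      linear_combination -key
    rcases mul_eq_zero.mp h2 with h3 | h3
    · exact h3
    · exact absurd (by linear_combination h3) hs₀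

lemma prim_piS (hχ : χ.IsPrimitive) (A : S)
    (h : ∀ s : S, χ (1 + (p:S)*(s*A)) = 1) : piS A = 0 := by
  haveI : NeZero (p^2) := ⟨pow_ne_zero 2 (Nat.Prime.ne_zero Fact.out)⟩
  by_contra hA
  have hUA : IsUnit A := (isUnit_iff_piS A).mpr hA
  have h' : ∀ y : S, χ (1 + (p:S)*y) = 1 := by
    intro y
    have := h (y * A⁻¹)
    rwa [mul_assoc, ZMod.inv_mul_of_unit A hUA, mul_one] at this
  have hft : DirichletCharacter.FactorsThrough χ p := by
    rw [DirichletCharacter.factorsThrough_iff_ker_unitsMap (dvd_pow_self p two_ne_zero)]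
    intro v hv
    rw [MonoidHom.mem_ker] at hv ⊢
    have hv1 : piS ((v : S) - 1) = 0 := by
      have : piS (v : S) = 1 := by
        have := congrArg (Units.val) hv
        simpa [ZMod.unitsMap_def, piS] using this
      rw [map_sub, this, map_one, sub_self]
    obtain ⟨z, hz⟩ := (piS_eq_zero_iff _).mp hv1
    have hv2 : (v : S) = 1 + (p:S)*z := by linear_combination hz
    ext
    rw [MulChar.coe_toUnitHom, hv2, h' z, Units.val_one]
  have hle : DirichletCharacter.conductor χ ≤ p :=
    Nat.sInf_le ((DirichletCharacter.mem_conductorSet_iff _).mpr hft)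
  rw [hχ] at hle
  have hp2 : 2 ≤ p := (Fact.out : p.Prime).two_le
  nlinarith

lemma exists_k (hχ : χ.IsPrimitive) :
    ∃ k : S, ∀ x : S, ψ (1 + (p:S)*x) = χ (1 + (p:S)*(k*x)) := by
  haveI : Fact (1 < p) := ⟨(Fact.out : p.Prime).one_lt⟩
  -- nontriviality of e
  have hnt : ∃ x₀ : S, χ (1 + (p:S)*x₀) ≠ 1 := by
    by_contra hall
    push_neg at hall
    have := prim_piS χ hχ 1 (fun s => by simpa using hall s)
    simp at this
  obtain ⟨x₀, hx₀⟩ := hnt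
  have hpx₀ : piS x₀ ≠ 0 := by
    intro h0
    obtain ⟨z, hz⟩ := (piS_eq_zero_iff _).mp h0
    apply hx₀
    have h1 : (1 : S) + (p:S)*x₀ = 1 := by
      rw [hz]; linear_combination z * (PP (p := p))
    rw [h1, map_one]
  set z := χ (1 + (p:S)*x₀) with hzdef
  have hzp : z ^ p = 1 := e_pow_p χ x₀
  have hord : orderOf z = p := orderOf_eq_prime hzp hx₀
  have hprim : IsPrimitiveRoot z p := hord ▸ IsPrimitiveRoot.orderOf z
  have hwp : (ψ (1 + (p:S)*x₀)) ^ p = 1 := e_pow_p ψ x₀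
  haveI : NeZero p := ⟨(Fact.out : p.Prime).ne_zero⟩
  obtain ⟨j, _, hj⟩ := hprim.eq_pow_of_pow_eq_one hwp
  refine ⟨(j : S), fun x => ?_⟩
  -- write m
  set m : ℕ := (piS x * (piS x₀)⁻¹).val with hm
  have hmx : piS (x - (m:S)*x₀) = 0 := by
    rw [map_sub, map_mul, map_natCast, hm, ZMod.natCast_val, ZMod.cast_id]
    field_simp
    simp
  obtain ⟨y, hy⟩ := (piS_eq_zero_iff _).mp hmx
  have hxeq : x = (m:S)*x₀ + (p:S)*y := by linear_combination hy
  have hpsi : ψ (1 + (p:S)*x) = ψ (1 + (p:S)*((m:S)*x₀)) := by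
    apply e_congr
    rw [hxeq]
    rw [map_sub]
    simp only [map_add, map_mul, map_natCast, ZMod.natCast_self, zero_mul, add_zero, sub_self]
  have hpsi2 : ψ (1 + (p:S)*((m:S)*x₀)) = (ψ (1 + (p:S)*x₀))^m := by
    rw [e_pow]
  have hchi : χ (1 + (p:S)*((j : S)*x)) = z^(j*m) := by
    rw [e_pow]
    apply e_congr
    rw [map_sub]
    have h1 : piS x = (m : ZMod p) * piS x₀ := by
      rw [hm, ZMod.natCast_val, ZMod.cast_id]
      field_simp
    rw [map_mul, map_mul, map_natCast, map_natCast, h1]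
    push_cast
    ring
  rw [hpsi, hpsi2, ← hj, ← pow_mul, ← hchi]
end CharLemmas2
section MainComp
variable {p : ℕ} [Fact p.Prime] (χ ψ : DirichletCharacter ℂ (p^2))
local notation "S" => ZMod (p^2)

noncomputable def Fq (t u : S) : ℂ :=
  χ t * (starRingEnd ℂ) (χ (t + 1)) * (starRingEnd ℂ) (χ u) * χ (u + 1) * ψ (u * t - 1)

lemma chi_ne_zero_of_unit (χ : DirichletCharacter ℂ (p^2)) {a : S} (ha : IsUnit a) :
    χ a ≠ 0 := by
  rw [← ha.unit_spec, ← MulChar.coe_equivToUnitHom]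
  exact Units.ne_zero _

lemma units_of_Fq_ne {t u : S} (h : Fq χ ψ t u ≠ 0) :
    IsUnit t ∧ IsUnit (t+1) ∧ IsUnit u ∧ IsUnit (u+1) ∧ IsUnit (u*t-1) := by
  refine ⟨?_, ?_, ?_, ?_, ?_⟩ <;>
    · by_contra hu
      apply h
      simp [Fq, MulChar.map_nonunit _ hu]

lemma Fq_ne_of_units {t u : S} (ht : IsUnit t) (ht1 : IsUnit (t+1)) (hu : IsUnit u)
    (hu1 : IsUnit (u+1)) (hw : IsUnit (u*t-1)) : Fq χ ψ t u ≠ 0 := by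
  rw [Fq]
  refine mul_ne_zero (mul_ne_zero (mul_ne_zero (mul_ne_zero ?_ ?_) ?_) ?_) ?_
  · exact chi_ne_zero_of_unit χ ht
  · simpa using chi_ne_zero_of_unit χ ht1
  · simpa using chi_ne_zero_of_unit χ hu
  · exact chi_ne_zero_of_unit χ hu1
  · exact chi_ne_zero_of_unit ψ hw

lemma Fq_abs_le (t u : S) : ‖Fq χ ψ t u‖ ≤ 1 := by
  have h1 := DirichletCharacter.norm_le_one χ t
  have h2 := DirichletCharacter.norm_le_one χ (t+1)
  have h3 := DirichletCharacter.norm_le_one χ u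
  have h4 := DirichletCharacter.norm_le_one χ (u+1)
  have h5 := DirichletCharacter.norm_le_one ψ (u*t-1)
  rw [Fq]
  simp only [norm_mul, Complex.norm_conj]
  have n1 := norm_nonneg (χ t)
  have n2 := norm_nonneg (χ (t+1))
  have n3 := norm_nonneg (χ u)
  have n4 := norm_nonneg (χ (u+1))
  have n5 := norm_nonneg (ψ (u*t-1))
  calc ‖χ t‖ * ‖χ (t + 1)‖ * ‖χ u‖ * ‖χ (u + 1)‖ *
      ‖ψ (u * t - 1)‖ ≤ 1*1*1*1*1 := by
        gcongr <;> positivity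
    _ = 1 := by norm_num

lemma shift_t1 (t s : S) : t*(1+(p:S)*s) + 1 = (t+1) + (p:S)*(s*t) := by ring

lemma shift_w (t u s r : S) :
    (u*(1+(p:S)*r))*(t*(1+(p:S)*s)) - 1 = (u*t - 1) + (p:S)*(u*t*(s+r) + (p:S)*(u*t*s*r)) := by
  ring

lemma units_shift {t u : S} (s r : S) (ht : IsUnit t) (ht1 : IsUnit (t+1)) (hu : IsUnit u)
    (hu1 : IsUnit (u+1)) (hw : IsUnit (u*t-1)) :
    IsUnit (t*(1+(p:S)*s)) ∧ IsUnit (t*(1+(p:S)*s)+1) ∧ IsUnit (u*(1+(p:S)*r)) ∧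
      IsUnit (u*(1+(p:S)*r)+1) ∧ IsUnit ((u*(1+(p:S)*r))*(t*(1+(p:S)*s))-1) := by
  refine ⟨ht.mul (isUnit1p s), ?_, hu.mul (isUnit1p r), ?_, ?_⟩
  · rw [shift_t1, isUnit_add_p_mul]; exact ht1
  · rw [shift_t1, isUnit_add_p_mul]; exact hu1
  · rw [shift_w, isUnit_add_p_mul]; exact hw

lemma Fq_shift_zero {t u : S} (s r : S) (h : Fq χ ψ t u = 0) :
    Fq χ ψ (t*(1+(p:S)*s)) (u*(1+(p:S)*r)) = 0 := by
  by_contra hne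
  obtain ⟨ht, ht1, hu, hu1, hw⟩ := units_of_Fq_ne χ ψ hne
  have ht' : IsUnit t := (isUnit_of_mul_isUnit_left ht : IsUnit t)
  have hu' : IsUnit u := (isUnit_of_mul_isUnit_left hu : IsUnit u)
  rw [shift_t1, isUnit_add_p_mul] at ht1
  rw [shift_t1, isUnit_add_p_mul] at hu1
  rw [shift_w, isUnit_add_p_mul] at hw
  exact Fq_ne_of_units χ ψ ht' ht1 hu' hu1 hw h

end MainComp
section ShiftId
variable {p : ℕ} [Fact p.Prime] (χ ψ : DirichletCharacter ℂ (p^2))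
local notation "S" => ZMod (p^2)

/-- the phase coefficients -/
noncomputable def alphaC (k t u : S) : S := (t+1)⁻¹ + k*(u*t*(u*t-1)⁻¹)
noncomputable def betaC (k t u : S) : S := k*(u*t*(u*t-1)⁻¹) - (u+1)⁻¹

lemma Fq_shift {k : S} (hk : ∀ x : S, ψ (1 + (p:S)*x) = χ (1 + (p:S)*(k*x)))
    {t u : S} (ht : IsUnit t) (ht1 : IsUnit (t+1)) (hu : IsUnit u)
    (hu1 : IsUnit (u+1)) (hw : IsUnit (u*t-1)) (s r : S) :
    Fq χ ψ (t*(1+(p:S)*s)) (u*(1+(p:S)*r)) =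
      Fq χ ψ t u * χ (1 + (p:S)*(s * alphaC k t u)) * χ (1 + (p:S)*(r * betaC k t u)) := by
  have hi1 : (t+1) * (t+1)⁻¹ = 1 := ZMod.mul_inv_of_unit _ ht1
  have hi2 : (u+1) * (u+1)⁻¹ = 1 := ZMod.mul_inv_of_unit _ hu1
  have hiw : (u*t-1) * (u*t-1)⁻¹ = 1 := ZMod.mul_inv_of_unit _ hw
  -- factor 1
  have f1 : χ (t*(1+(p:S)*s)) = χ t * χ (1 + (p:S)*s) := map_mul χ _ _
  -- factor 2
  have e2 : t*(1+(p:S)*s) + 1 = (t+1) * (1 + (p:S)*(s*(t*(t+1)⁻¹))) := by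
    linear_combination (-((p:S)*s*t)) * hi1
  have f2 : (starRingEnd ℂ) (χ (t*(1+(p:S)*s) + 1)) =
      (starRingEnd ℂ) (χ (t+1)) * χ (1 + (p:S)*(-(s*(t*(t+1)⁻¹)))) := by
    rw [e2, map_mul, map_mul, conj_e]
  -- factor 3
  have f3 : (starRingEnd ℂ) (χ (u*(1+(p:S)*r))) =
      (starRingEnd ℂ) (χ u) * χ (1 + (p:S)*(-r)) := by
    rw [map_mul, map_mul, conj_e]
  -- factor 4
  have e4 : u*(1+(p:S)*r) + 1 = (u+1) * (1 + (p:S)*(r*(u*(u+1)⁻¹))) := by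
    linear_combination (-((p:S)*r*u)) * hi2
  have f4 : χ (u*(1+(p:S)*r) + 1) = χ (u+1) * χ (1 + (p:S)*(r*(u*(u+1)⁻¹))) := by
    rw [e4, map_mul]
  -- factor 5
  have e5 : (u*(1+(p:S)*r))*(t*(1+(p:S)*s)) - 1 =
      (u*t-1) * (1 + (p:S)*((s+r)*(u*t*(u*t-1)⁻¹))) := by
    linear_combination (-((p:S)*(s+r)*u*t)) * hiw + (u*t*s*r) * (PP (p := p))
  have f5 : ψ ((u*(1+(p:S)*r))*(t*(1+(p:S)*s)) - 1) =
      ψ (u*t-1) * χ (1 + (p:S)*(k*((s+r)*(u*t*(u*t-1)⁻¹)))) := by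
    rw [e5, map_mul, hk]
  rw [Fq, f1, f2, f3, f4, f5]
  rw [show Fq χ ψ t u * χ (1 + (p:S)*(s * alphaC k t u)) * χ (1 + (p:S)*(r * betaC k t u)) =
    Fq χ ψ t u * (χ (1 + (p:S)*(s * alphaC k t u)) * χ (1 + (p:S)*(r * betaC k t u))) from by ring]
  rw [← e_add]
  have harg : s * alphaC k t u + r * betaC k t u =
      s + (-(s*(t*(t+1)⁻¹)) + (-r + (r*(u*(u+1)⁻¹) + k*((s+r)*(u*t*(u*t-1)⁻¹))))) := by
    rw [alphaC, betaC]
    linear_combination (s) * hi1 + (-r) * hi2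
  rw [harg, e_add, e_add, e_add, e_add, Fq]
  ring
end ShiftId
section Sums
variable {p : ℕ} [Fact p.Prime] (χ ψ : DirichletCharacter ℂ (p^2))
local notation "S" => ZMod (p^2)

def mulShiftEquiv (s : S) : S ≃ S where
  toFun t := t*(1+(p:S)*s)
  invFun t := t*(1-(p:S)*s)
  left_inv t := by
    show t*(1+(p:S)*s)*(1-(p:S)*s) = t
    rw [mul_assoc, unit1p, mul_one]
  right_inv t := by
    show t*(1-(p:S)*s)*(1+(p:S)*s) = t
    rw [mul_assoc, mul_comm (1-(p:S)*s), unit1p, mul_one]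

lemma sum_shift (f : S → ℂ) (s : S) : ∑ t : S, f (t*(1+(p:S)*s)) = ∑ t : S, f t :=
  Equiv.sum_comp (mulShiftEquiv s) f

noncomputable def Tsum (A : S) : ℂ := ∑ s : S, χ (1 + (p:S)*(s*A))

lemma double_factor (c : ℂ) (f g : S → ℂ) :
    ∑ s : S, ∑ r : S, c * f s * g r = c * (∑ s : S, f s) * (∑ r : S, g r) := by
  calc ∑ s : S, ∑ r : S, c * f s * g r
      = ∑ s : S, (c * f s) * (∑ r : S, g r) :=
        Finset.sum_congr rfl fun s _ => (Finset.mul_sum _ _ _).symm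
    _ = (∑ s : S, c * f s) * (∑ r : S, g r) := (Finset.sum_mul _ _ _).symm
    _ = c * (∑ s : S, f s) * (∑ r : S, g r) := by rw [← Finset.mul_sum]

lemma inner_eq {k : S} (hk : ∀ x : S, ψ (1 + (p:S)*x) = χ (1 + (p:S)*(k*x))) (t u : S) :
    ∑ s : S, ∑ r : S, Fq χ ψ (t*(1+(p:S)*s)) (u*(1+(p:S)*r)) =
      Fq χ ψ t u * Tsum χ (alphaC k t u) * Tsum χ (betaC k t u) := by
  by_cases hF : Fq χ ψ t u = 0
  · rw [hF, zero_mul, zero_mul]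
    apply Finset.sum_eq_zero
    intro s _
    apply Finset.sum_eq_zero
    intro r _
    exact Fq_shift_zero χ ψ s r hF
  · obtain ⟨ht, ht1, hu, hu1, hw⟩ := units_of_Fq_ne χ ψ hF
    have hrw : ∀ s r : S, Fq χ ψ (t*(1+(p:S)*s)) (u*(1+(p:S)*r)) =
        Fq χ ψ t u * χ (1 + (p:S)*(s * alphaC k t u)) * χ (1 + (p:S)*(r * betaC k t u)) :=
      fun s r => Fq_shift χ ψ hk ht ht1 hu hu1 hw s r
    simp only [Tsum]
    rw [← double_factor]
    exact Finset.sum_congr rfl fun s _ => Finset.sum_congr rfl fun r _ => hrw s r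

lemma gSum_eq : gSum χ ψ = ∑ t : S, ∑ u : S, Fq χ ψ t u := rfl

lemma g_shift (s r : S) :
    gSum χ ψ = ∑ t : S, ∑ u : S, Fq χ ψ (t*(1+(p:S)*s)) (u*(1+(p:S)*r)) := by
  rw [gSum_eq]
  calc ∑ t : S, ∑ u : S, Fq χ ψ t u
      = ∑ t : S, ∑ u : S, Fq χ ψ t (u*(1+(p:S)*r)) := by
        exact Finset.sum_congr rfl fun t _ => (sum_shift (fun u => Fq χ ψ t u) r).symm
    _ = ∑ t : S, ∑ u : S, Fq χ ψ (t*(1+(p:S)*s)) (u*(1+(p:S)*r)) := by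
        exact (sum_shift (fun t => ∑ u : S, Fq χ ψ t (u*(1+(p:S)*r))) s).symm

lemma E1 {k : S} (hk : ∀ x : S, ψ (1 + (p:S)*x) = χ (1 + (p:S)*(k*x))) :
    (((p:ℂ)^2)^2) * gSum χ ψ =
      ∑ t : S, ∑ u : S, Fq χ ψ t u * Tsum χ (alphaC k t u) * Tsum χ (betaC k t u) := by
  haveI : NeZero (p^2) := ⟨pow_ne_zero 2 (Nat.Prime.ne_zero Fact.out)⟩
  have hcard : (((p:ℂ)^2)^2) * gSum χ ψ = ∑ s : S, ∑ r : S, gSum χ ψ := by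
    rw [Finset.sum_const, Finset.sum_const, Finset.card_univ, ZMod.card, smul_smul, nsmul_eq_mul]
    push_cast
    ring
  rw [hcard]
  calc ∑ s : S, ∑ r : S, gSum χ ψ
      = ∑ s : S, ∑ r : S, ∑ t : S, ∑ u : S, Fq χ ψ (t*(1+(p:S)*s)) (u*(1+(p:S)*r)) := by
        exact Finset.sum_congr rfl fun s _ => Finset.sum_congr rfl fun r _ => g_shift χ ψ s r
    _ = ∑ s : S, ∑ t : S, ∑ r : S, ∑ u : S, Fq χ ψ (t*(1+(p:S)*s)) (u*(1+(p:S)*r)) := by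
        exact Finset.sum_congr rfl fun s _ => Finset.sum_comm
    _ = ∑ t : S, ∑ s : S, ∑ r : S, ∑ u : S, Fq χ ψ (t*(1+(p:S)*s)) (u*(1+(p:S)*r)) :=
        Finset.sum_comm
    _ = ∑ t : S, ∑ s : S, ∑ u : S, ∑ r : S, Fq χ ψ (t*(1+(p:S)*s)) (u*(1+(p:S)*r)) := by
        exact Finset.sum_congr rfl fun t _ => Finset.sum_congr rfl fun s _ => Finset.sum_comm
    _ = ∑ t : S, ∑ u : S, ∑ s : S, ∑ r : S, Fq χ ψ (t*(1+(p:S)*s)) (u*(1+(p:S)*r)) := by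
        exact Finset.sum_congr rfl fun t _ => Finset.sum_comm
    _ = ∑ t : S, ∑ u : S, Fq χ ψ t u * Tsum χ (alphaC k t u) * Tsum χ (betaC k t u) := by
        exact Finset.sum_congr rfl fun t _ => Finset.sum_congr rfl fun u _ => inner_eq χ ψ hk t u

open Classical in
lemma g_final {k : S} (hk : ∀ x : S, ψ (1 + (p:S)*x) = χ (1 + (p:S)*(k*x))) :
    gSum χ ψ = ∑ t : S, ∑ u : S, Fq χ ψ t u *
      (if (∀ s : S, χ (1 + (p:S)*(s * alphaC k t u)) = 1) then (1:ℂ) else 0) *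
      (if (∀ s : S, χ (1 + (p:S)*(s * betaC k t u)) = 1) then (1:ℂ) else 0) := by
  have hp0 : (p:ℂ) ≠ 0 := Nat.cast_ne_zero.mpr (Nat.Prime.ne_zero Fact.out)
  have hq : ((p:ℂ)^2)^2 ≠ 0 := pow_ne_zero 2 (pow_ne_zero 2 hp0)
  apply mul_left_cancel₀ hq
  rw [E1 χ ψ hk, Finset.mul_sum]
  apply Finset.sum_congr rfl
  intro t _
  rw [Finset.mul_sum]
  apply Finset.sum_congr rfl
  intro u _
  rw [Tsum, Tsum, sum_e, sum_e]
  split_ifs <;> ring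
end Sums
section Derive
variable {p : ℕ} [Fact p.Prime] (χ ψ : DirichletCharacter ℂ (p^2))
local notation "S" => ZMod (p^2)

lemma derive_cond (hχ : χ.IsPrimitive) {k t u : S}
    (ht1 : IsUnit (t+1)) (hu1 : IsUnit (u+1)) (hw : IsUnit (u*t-1))
    (hα : ∀ s : S, χ (1 + (p:S)*(s * alphaC k t u)) = 1)
    (hβ : ∀ s : S, χ (1 + (p:S)*(s * betaC k t u)) = 1) :
    (piS k) * (piS t)^2 + (2*(piS k)+1)*(piS t) + 1 = 0 ∧ piS u = -(piS t) - 2 := by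
  set a := piS t with hadef
  set b := piS u with hbdef
  set κ := piS k with hkdef
  have hi1 : (a + 1) * piS ((t+1)⁻¹) = 1 := by
    have := congrArg piS (ZMod.mul_inv_of_unit (t+1) ht1)
    rwa [map_mul, map_add, map_one] at this
  have hi2 : (b + 1) * piS ((u+1)⁻¹) = 1 := by
    have := congrArg piS (ZMod.mul_inv_of_unit (u+1) hu1)
    rwa [map_mul, map_add, map_one] at this
  have hiw : (b*a - 1) * piS ((u*t-1)⁻¹) = 1 := by
    have := congrArg piS (ZMod.mul_inv_of_unit (u*t-1) hw)
    rwa [map_mul, map_sub, map_mul, map_one] at this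
  have hA : piS ((t+1)⁻¹) + κ * (b * a * piS ((u*t-1)⁻¹)) = 0 := by
    have := prim_piS χ hχ _ hα
    rwa [alphaC, map_add, map_mul, map_mul, map_mul] at this
  have hB : κ * (b * a * piS ((u*t-1)⁻¹)) - piS ((u+1)⁻¹) = 0 := by
    have := prim_piS χ hχ _ hβ
    rwa [betaC, map_sub, map_mul, map_mul, map_mul] at this
  have ha1 : a + 1 ≠ 0 := by
    have := (isUnit_iff_piS (t+1)).mp ht1
    rwa [map_add, map_one] at this
  have hba : b*a - 1 ≠ 0 := by
    have := (isUnit_iff_piS (u*t-1)).mp hw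
    rwa [map_sub, map_mul, map_one] at this
  have R1 : (b*a - 1) + κ*(b*a)*(a+1) = 0 := by
    linear_combination ((a+1)*(b*a-1))*hA - (b*a-1)*hi1 - (κ*b*a*(a+1))*hiw
  have R2 : -(b*a - 1) + κ*(b*a)*(b+1) = 0 := by
    linear_combination ((b+1)*(b*a-1))*hB + (b*a-1)*hi2 - (κ*b*a*(b+1))*hiw
  have hκba : κ*(b*a) ≠ 0 := by
    intro h0
    apply hba
    linear_combination R1 - (a+1)*h0
  have hsum : (κ*(b*a))*(a+b+2) = 0 := by linear_combination R1 + R2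
  have hab : b = -a - 2 := by
    rcases mul_eq_zero.mp hsum with h' | h'
    · exact absurd h' hκba
    · linear_combination h'
  have hq0 : (a+1) * (κ*a^2 + (2*κ+1)*a + 1) = 0 := by
    linear_combination -R1 + (a*(1+κ*(a+1)))*hab
  rcases mul_eq_zero.mp hq0 with h' | h'
  · exact absurd h' ha1
  · exact ⟨h', hab⟩

end Derive

section Counting
variable {p : ℕ} [Fact p.Prime]
local notation "S" => ZMod (p^2)

lemma fiber_card (b : ZMod p) :
    (Finset.univ.filter (fun u : S => piS u = b)).card = p := by
  haveI : NeZero p := ⟨(Fact.out : p.Prime).ne_zero⟩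
  apply Finset.card_eq_of_bijective (fun i _ => ((b.val + p*i : ℕ) : S))
  · -- surjective
    intro u hu
    rw [Finset.mem_filter] at hu
    have hub : piS (u - ((b.val : ℕ) : S)) = 0 := by
      rw [map_sub, map_natCast, ZMod.natCast_rightInverse b, hu.2, sub_self]
    obtain ⟨z, hz⟩ := (piS_eq_zero_iff _).mp hub
    have hz2 : piS (z - (((piS z).val : ℕ) : S)) = 0 := by
      rw [map_sub, map_natCast, ZMod.natCast_rightInverse (piS z), sub_self]
    obtain ⟨w, hw⟩ := (piS_eq_zero_iff _).mp hz2
    refine ⟨(piS z).val, ZMod.val_lt _, ?_⟩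
    push_cast
    linear_combination -hz - (p:S)*hw - w * (PP (p := p))
  · -- maps into the fiber
    intro i _
    rw [Finset.mem_filter]
    refine ⟨Finset.mem_univ _, ?_⟩
    rw [map_natCast]
    push_cast
    rw [ZMod.natCast_self]
    rw [ZMod.natCast_rightInverse b]
    ring
  · -- injective
    intro i j hi hj hij
    have := (ZMod.natCast_eq_natCast_iff _ _ _).mp hij
    have h2 : b.val + p*i ≡ b.val + p*j [MOD p*p] := by
      rwa [← pow_two]
    have h3 : p*i ≡ p*j [MOD p*p] := Nat.ModEq.add_left_cancel' _ h2
    have h4 : i ≡ j [MOD p] :=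
      Nat.ModEq.mul_left_cancel' (Fact.out : p.Prime).ne_zero h3
    exact Nat.ModEq.eq_of_lt_of_lt h4 hi hj

lemma quad_count (κ : ZMod p) :
    (Finset.univ.filter (fun a : ZMod p => κ*a^2 + (2*κ+1)*a + 1 = 0)).card ≤ 2 := by
  classical
  set f : Polynomial (ZMod p) :=
    Polynomial.C κ * Polynomial.X^2 + Polynomial.C (2*κ+1) * Polynomial.X + Polynomial.C 1
    with hf
  have hc0 : f.coeff 0 = 1 := by
    simp [hf, Polynomial.coeff_add, Polynomial.coeff_C_mul, Polynomial.coeff_X_pow]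
  have hf0 : f ≠ 0 := by
    intro h
    rw [h, Polynomial.coeff_zero] at hc0
    exact one_ne_zero hc0.symm
  have hdeg : f.natDegree ≤ 2 := by
    rw [hf]
    compute_degree
  have hsub : (Finset.univ.filter (fun a : ZMod p => κ*a^2 + (2*κ+1)*a + 1 = 0)) ⊆
      f.roots.toFinset := by
    intro a ha
    rw [Finset.mem_filter] at ha
    rw [Multiset.mem_toFinset, Polynomial.mem_roots hf0]
    show f.eval a = 0
    rw [hf]
    simp only [Polynomial.eval_add, Polynomial.eval_mul, Polynomial.eval_C, Polynomial.eval_pow,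
      Polynomial.eval_X]
    linear_combination ha.2
  calc (Finset.univ.filter (fun a : ZMod p => κ*a^2 + (2*κ+1)*a + 1 = 0)).card
      ≤ f.roots.toFinset.card := Finset.card_le_card hsub
    _ ≤ Multiset.card f.roots := f.roots.toFinset_card_le
    _ ≤ f.natDegree := f.card_roots'
    _ ≤ 2 := hdeg

lemma quadS_count (κ : ZMod p) :
    (Finset.univ.filter (fun t : S => κ*(piS t)^2 + (2*κ+1)*(piS t) + 1 = 0)).card ≤ 2*p := by
  classical
  set Q := Finset.univ.filter (fun a : ZMod p => κ*a^2 + (2*κ+1)*a + 1 = 0) with hQ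
  have key := Finset.card_eq_sum_card_fiberwise
    (f := piS) (s := Finset.univ.filter (fun t : S => κ*(piS t)^2 + (2*κ+1)*(piS t) + 1 = 0))
    (t := Q) ?_
  · rw [key]
    calc ∑ a ∈ Q, ((Finset.univ.filter
            (fun t : S => κ*(piS t)^2 + (2*κ+1)*(piS t) + 1 = 0)).filter
            (fun t => piS t = a)).card
        ≤ ∑ _a ∈ Q, p := by
          apply Finset.sum_le_sum
          intro a _
          have hsub : ((Finset.univ.filter
              (fun t : S => κ*(piS t)^2 + (2*κ+1)*(piS t) + 1 = 0)).filter
              (fun t => piS t = a)) ⊆ Finset.univ.filter (fun u : S => piS u = a) := by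
            intro t ht
            rw [Finset.mem_filter] at ht ⊢
            exact ⟨Finset.mem_univ _, ht.2⟩
          exact le_trans (Finset.card_le_card hsub) (le_of_eq (fiber_card a))
      _ = Q.card * p := by rw [Finset.sum_const, smul_eq_mul]
      _ ≤ 2*p := Nat.mul_le_mul_right p (quad_count κ)
  · intro t ht
    rw [Finset.mem_coe, Finset.mem_filter] at ht
    rw [Finset.mem_coe, hQ, Finset.mem_filter]
    exact ⟨Finset.mem_univ _, ht.2⟩

end Counting
section Final
variable {p : ℕ} [Fact p.Prime]
local notation "S" => ZMod (p^2)

open Classical in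
lemma count_final (κ : ZMod p) :
    ∑ t : S, ∑ u : S,
      (if (κ*(piS t)^2 + (2*κ+1)*(piS t) + 1 = 0 ∧ piS u = -(piS t) - 2) then (1:ℝ) else 0)
      ≤ 2*(p:ℝ)^2 := by
  have inner : ∀ t : S,
      (∑ u : S, if (κ*(piS t)^2 + (2*κ+1)*(piS t) + 1 = 0 ∧ piS u = -(piS t) - 2)
        then (1:ℝ) else 0)
      = if (κ*(piS t)^2 + (2*κ+1)*(piS t) + 1 = 0) then (p:ℝ) else 0 := by
    intro t
    by_cases hq : κ*(piS t)^2 + (2*κ+1)*(piS t) + 1 = 0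
    · rw [if_pos hq]
      simp only [hq, true_and]
      rw [Finset.sum_boole, fiber_card]
    · simp only [hq, false_and, if_false]
      simp
  rw [Finset.sum_congr rfl (fun t _ => inner t)]
  have step : ∀ t : S, (if (κ*(piS t)^2 + (2*κ+1)*(piS t) + 1 = 0) then (p:ℝ) else 0)
      = (p:ℝ) * (if (κ*(piS t)^2 + (2*κ+1)*(piS t) + 1 = 0) then (1:ℝ) else 0) := by
    intro t; split_ifs <;> ring
  rw [Finset.sum_congr rfl (fun t _ => step t), ← Finset.mul_sum, Finset.sum_boole]
  have hcard := quadS_count (p := p) κ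
  calc (p:ℝ) * ((Finset.univ.filter
        (fun t : S => κ*(piS t)^2 + (2*κ+1)*(piS t) + 1 = 0)).card : ℝ)
      ≤ (p:ℝ) * ((2*p : ℕ) : ℝ) := by
        have := Nat.cast_le (α := ℝ) |>.mpr hcard
        have hp0 : (0:ℝ) ≤ (p:ℝ) := Nat.cast_nonneg p
        exact mul_le_mul_of_nonneg_left this hp0
    _ = 2*(p:ℝ)^2 := by push_cast; ring

end Final

/-- For p prime, χ primitive modulo p² and ψ any Dirichlet character modulo p²,
|g(χ,ψ)| ≤ 2p². -/
theorem gSum_bound_prime_squared (p : ℕ) [Fact p.Prime]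
    (χ ψ : DirichletCharacter ℂ (p ^ 2)) (hχ : χ.IsPrimitive) :
    ‖gSum χ ψ‖ ≤ 2 * (p : ℝ) ^ 2 := by
  classical
  obtain ⟨k, hk⟩ := exists_k χ ψ hχ
  rw [g_final χ ψ hk]
  set κ := piS k with hκ
  have pointwise : ∀ t u : ZMod (p^2),
      ‖Fq χ ψ t u *
        (if (∀ s : ZMod (p^2), χ (1 + (p:ZMod (p^2))*(s * alphaC k t u)) = 1)
          then (1:ℂ) else 0) *
        (if (∀ s : ZMod (p^2), χ (1 + (p:ZMod (p^2))*(s * betaC k t u)) = 1)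
          then (1:ℂ) else 0)‖
      ≤ (if (κ*(piS t)^2 + (2*κ+1)*(piS t) + 1 = 0 ∧ piS u = -(piS t) - 2)
          then (1:ℝ) else 0) := by
    intro t u
    by_cases h1 : ∀ s : ZMod (p^2), χ (1 + (p:ZMod (p^2))*(s * alphaC k t u)) = 1
    · by_cases h2 : ∀ s : ZMod (p^2), χ (1 + (p:ZMod (p^2))*(s * betaC k t u)) = 1
      · rw [if_pos h1, if_pos h2, mul_one, mul_one]
        by_cases hF : Fq χ ψ t u = 0
        · rw [hF, norm_zero]
          split_ifs <;> norm_num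
        · obtain ⟨ht, ht1, hu, hu1, hw⟩ := units_of_Fq_ne χ ψ hF
          obtain ⟨hq, hu2⟩ := derive_cond χ hχ ht1 hu1 hw h1 h2
          rw [if_pos ⟨hq, hu2⟩]
          exact Fq_abs_le χ ψ t u
      · rw [if_neg h2, mul_zero, norm_zero]
        split_ifs <;> norm_num
    · rw [if_neg h1, mul_zero, zero_mul, norm_zero]
      split_ifs <;> norm_num
  calc ‖∑ t : ZMod (p^2), ∑ u : ZMod (p^2), Fq χ ψ t u *
        (if (∀ s : ZMod (p^2), χ (1 + (p:ZMod (p^2))*(s * alphaC k t u)) = 1)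
          then (1:ℂ) else 0) *
        (if (∀ s : ZMod (p^2), χ (1 + (p:ZMod (p^2))*(s * betaC k t u)) = 1)
          then (1:ℂ) else 0)‖
      ≤ ∑ t : ZMod (p^2), ∑ u : ZMod (p^2), ‖Fq χ ψ t u *
        (if (∀ s : ZMod (p^2), χ (1 + (p:ZMod (p^2))*(s * alphaC k t u)) = 1)
          then (1:ℂ) else 0) *
        (if (∀ s : ZMod (p^2), χ (1 + (p:ZMod (p^2))*(s * betaC k t u)) = 1)
          then (1:ℂ) else 0)‖ := by
        refine le_trans (norm_sum_le _ _) ?_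
        exact Finset.sum_le_sum fun t _ => norm_sum_le _ _
    _ ≤ ∑ t : ZMod (p^2), ∑ u : ZMod (p^2),
        (if (κ*(piS t)^2 + (2*κ+1)*(piS t) + 1 = 0 ∧ piS u = -(piS t) - 2)
          then (1:ℝ) else 0) := by
        exact Finset.sum_le_sum fun t _ => Finset.sum_le_sum fun u _ => pointwise t u
    _ ≤ 2*(p:ℝ)^2 := count_final κ
end

section
/- Let p be a prime, let χ be a primitive Dirichlet character modulo p², and let ψ be a Dirichlet character modulo p² whose conductor divides p (i.e., ψ is not primitive). Then g(χ, ψ) = 0. -/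
section SquareZero

variable {R : Type*} [CommRing R] {d : R}

lemma one_add_pow_of_mul_self_eq_zero (hd : d * d = 0) (k : ℕ) : (1 + d) ^ k = 1 + k * d := by
  induction k with
  | zero => simp
  | succ k ih => push_cast; linear_combination (1 + d) * ih + k * hd

def squareZeroShift (hd : d * d = 0) : R ≃ R where
  toFun t := t + d * t * (t + 1)
  invFun s := s - d * s * (s + 1)
  left_inv t := by
    dsimp only
    linear_combination (-(t * (t + 1) * (2 * t + 1)) - d * t ^ 2 * (t + 1) ^ 2) * hd
  right_inv s := by
    dsimp only
    linear_combination (-(s * (s + 1) * (2 * s + 1)) + d * s ^ 2 * (s + 1) ^ 2) * hd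

lemma squareZeroShift_apply (hd : d * d = 0) (t : R) :
    squareZeroShift hd t = t + d * t * (t + 1) := rfl

lemma squareZeroShift_eq_mul (hd : d * d = 0) (t : R) :
    squareZeroShift hd t = (1 + d) * t * (1 + d * t) := by
  rw [squareZeroShift_apply]; linear_combination (-t ^ 2) * hd

lemma squareZeroShift_add_one (hd : d * d = 0) (t : R) :
    squareZeroShift hd t + 1 = (t + 1) * (1 + d * t) := by
  rw [squareZeroShift_apply]; ring

end SquareZero

namespace ZMod

lemma exists_eq_natCast_mul_of_castHom_eq_zero {n d : ℕ} [NeZero n] (hdn : d ∣ n) {y : ZMod n}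
    (hy : castHom hdn (ZMod d) y = 0) : ∃ k : ℕ, y = d * k := by
  have hval : (y.val : ZMod n) = y := by rw [natCast_val, cast_id]
  rw [← hval, map_natCast, natCast_eq_zero_iff] at hy
  obtain ⟨k, hk⟩ := hy
  exact ⟨k, by rw [← hval, hk, Nat.cast_mul]⟩

end ZMod

namespace DirichletCharacter

lemma mul_conj_apply_of_isUnit {n : ℕ} (χ : DirichletCharacter ℂ n) {a : ZMod n} (ha : IsUnit a) :
    χ a * starRingEnd ℂ (χ a) = 1 := by
  rw [Complex.mul_conj', ← ha.unit_spec, χ.unit_norm_eq_one, Complex.ofReal_one, one_pow]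

variable {n : ℕ} [NeZero n] {R : Type*} [CommMonoidWithZero R] {d : ℕ}

lemma FactorsThrough.apply_one_add_mul_eq_one {ψ : DirichletCharacter R n}
    (hψ : ψ.FactorsThrough d) (hd : IsNilpotent (d : ZMod n)) (a : ZMod n) :
    ψ (1 + d * a) = 1 := by
  set u := ((Commute.all _ a).isNilpotent_mul_right hd).isUnit_one_add.unit with hu
  have hker : u ∈ (ZMod.unitsMap hψ.dvd).ker := by
    rw [MonoidHom.mem_ker, Units.ext_iff, ZMod.unitsMap_val, hu, IsUnit.unit_spec,
      ← ZMod.castHom_apply (h := hψ.dvd), map_add, map_mul, map_natCast, ZMod.natCast_self,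
      zero_mul, add_zero, map_one, Units.val_one]
  have hu_ker := (factorsThrough_iff_ker_unitsMap hψ.dvd).mp hψ hker
  rwa [MonoidHom.mem_ker, Units.ext_iff, MulChar.coe_toUnitHom, hu, IsUnit.unit_spec] at hu_ker

lemma FactorsThrough.apply_add_mul {ψ : DirichletCharacter R n}
    (hψ : ψ.FactorsThrough d) (hd : IsNilpotent (d : ZMod n)) (x a : ZMod n) :
    ψ (x + d * a) = ψ x := by
  by_cases hx : IsUnit x
  · have hfactor : x + d * a = x * (1 + d * (a * ↑hx.unit⁻¹)) := by
      rw [mul_add, mul_one, mul_left_comm x, mul_left_comm x, hx.mul_val_inv, mul_one]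
    rw [hfactor, map_mul, hψ.apply_one_add_mul_eq_one hd, mul_one]
  · have hxd : ¬IsUnit (x + d * a) := fun h ↦ hx <| by
      simpa using ((Commute.all _ a).isNilpotent_mul_right hd).neg.isUnit_add_left_of_commute h
        (Commute.all _ _)
    rw [ψ.map_nonunit hx, ψ.map_nonunit hxd]

lemma factorsThrough_of_apply_one_add_eq_one (χ : DirichletCharacter R n) (hdn : d ∣ n)
    (hd : (d : ZMod n) * d = 0) (h : χ (1 + d) = 1) : χ.FactorsThrough d := by
  refine (factorsThrough_iff_ker_unitsMap hdn).mpr fun x hx ↦ ?_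
  rw [MonoidHom.mem_ker, Units.ext_iff, ZMod.unitsMap_val, Units.val_one] at hx
  obtain ⟨k, hk⟩ := ZMod.exists_eq_natCast_mul_of_castHom_eq_zero hdn
    (y := (x : ZMod n) - 1) (by rw [map_sub, ZMod.castHom_apply, hx, map_one, sub_self])
  have hx_pow : (x : ZMod n) = (1 + d) ^ k := by
    rw [one_add_pow_of_mul_self_eq_zero hd, ← sub_eq_iff_eq_add', hk, mul_comm]
  rw [MonoidHom.mem_ker, Units.ext_iff, MulChar.coe_toUnitHom, hx_pow, map_pow, h, one_pow,
    Units.val_one]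

lemma IsPrimitive.apply_one_add_ne_one {χ : DirichletCharacter R n} (hχ : χ.IsPrimitive)
    (hdn : d ∣ n) (hd_lt : d < n) (hd : (d : ZMod n) * d = 0) : χ (1 + d) ≠ 1 := fun h ↦ by
  have hle : χ.conductor ≤ d := Nat.sInf_le (χ.factorsThrough_of_apply_one_add_eq_one hdn hd h)
  rw [χ.isPrimitive_def.mp hχ] at hle
  exact hd_lt.not_ge hle

end DirichletCharacter

theorem gSum_eq_apply_one_add_mul_gSum {n : ℕ} [NeZero n] (χ ψ : DirichletCharacter ℂ n)
    {d : ℕ} (hd : (d : ZMod n) * d = 0) (hψ : ψ.FactorsThrough d) :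
    gSum χ ψ = χ (1 + d) * gSum χ ψ := by
  have hnil : IsNilpotent (d : ZMod n) := ⟨2, by rw [sq, hd]⟩
  conv_lhs => rw [gSum, ← (squareZeroShift hd).sum_comp]
  rw [gSum, Finset.mul_sum]
  refine Finset.sum_congr rfl fun t _ ↦ ?_
  rw [Finset.mul_sum]
  refine Finset.sum_congr rfl fun u _ ↦ ?_
  have hψ_eq : ψ (u * squareZeroShift hd t - 1) = ψ (u * t - 1) := by
    rw [squareZeroShift_apply, ← hψ.apply_add_mul hnil (u * t - 1) (u * t * (t + 1))]
    ring_nf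
  have hunit : χ (1 + d * t) * starRingEnd ℂ (χ (1 + d * t)) = 1 :=
    χ.mul_conj_apply_of_isUnit ((Commute.all _ t).isNilpotent_mul_right hnil).isUnit_one_add
  rw [hψ_eq, squareZeroShift_add_one, squareZeroShift_eq_mul, map_mul, map_mul, map_mul, map_mul]
  linear_combination (χ (1 + d) * χ t * starRingEnd ℂ (χ (t + 1)) * starRingEnd ℂ (χ u)
    * χ (u + 1) * ψ (u * t - 1)) * hunit

/-- For p prime, χ primitive modulo p², and ψ a non-primitive character modulo p²
(i.e. of conductor dividing p), one has g(χ,ψ) = 0. -/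
theorem gSum_eq_zero_of_not_primitive (p : ℕ) [Fact p.Prime]
    (χ ψ : DirichletCharacter ℂ (p ^ 2)) (hχ : χ.IsPrimitive)
    (hψ : ψ.conductor ∣ p) :
    gSum χ ψ = 0 := by
  have hp_dvd : p ∣ p ^ 2 := dvd_pow_self p two_ne_zero
  have hp_lt : p < p ^ 2 := by nlinarith [(Fact.out : p.Prime).two_le]
  have hp_sq : (p : ZMod (p ^ 2)) * p = 0 := by rw [← Nat.cast_mul, ← sq, ZMod.natCast_self]
  have hψ_fac : ψ.FactorsThrough p := (ψ.mem_conductorSet_iff_conductor_dvd hp_dvd).mpr hψ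
  have hg : gSum χ ψ = χ (1 + p) * gSum χ ψ := gSum_eq_apply_one_add_mul_gSum χ ψ hp_sq hψ_fac
  by_contra hg_ne
  exact hχ.apply_one_add_ne_one hp_dvd hp_lt hp_sq ((mul_eq_right₀ hg_ne).mp hg.symm)
end

section
/- Let p be a prime, let χ be a primitive Dirichlet character modulo p², and let ψ be a primitive (hence nontrivial) Dirichlet character modulo p. Then |∑_{u,y ∈ ℤ/pℤ} ψ(u·y) · χ(1 + p·ỹ) · χ(1 − p·ũ) · conj(χ)(1 + p²·ũ·ỹ)| ≤ p, where ũ, ỹ ∈ {0,…,p−1} are the representatives of u and y, and the arguments of χ and conj(χ) are taken in ℤ/p²ℤ. -/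
/-!
Writing `E(a) = χ(1 + p ã)`, the congruence `(1 + p a)(1 + p b) ≡ 1 + p (a + b) (mod p²)` makes
`E` an additive character of `ℤ/pℤ`; it is nontrivial, since `χ` trivial on `1 + pℤ` would
factor through level `p`, contradicting primitivity.
Since `1 + p² ũ ỹ ≡ 1 (mod p²)` and `χ(1 - p ũ) = E(-u)`, the sum is the product of the Gauss sums
`g(ψ, E⁻¹) g(ψ, E)`, each of absolute value `√p`.
-/

open DirichletCharacter

lemma norm_gaussSum_eq_sqrt_card {R : Type*} [Field R] [Fintype R] {χ : MulChar R ℂ}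
    (hχ : χ ≠ 1) {ψ : AddChar R ℂ} (hψ : ψ.IsPrimitive) :
    ‖gaussSum χ ψ‖ = √(Fintype.card R) := by
  have h : gaussSum χ ψ * star (gaussSum χ ψ) = Fintype.card R := by
    rw [star_gaussSum_eq, gaussSum_mul_gaussSum_eq_card hχ hψ]
  rw [RCLike.star_def, Complex.mul_conj] at h
  rw [← Real.sqrt_sq (norm_nonneg _), Complex.sq_norm]
  exact_mod_cast congrArg Real.sqrt (by exact_mod_cast h)

lemma gaussSum_mul_gaussSum_eq_sum_sum {R R' : Type*} [CommRing R] [Fintype R] [CommRing R']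
    (χ : MulChar R R') (ψ φ : AddChar R R') :
    gaussSum χ ψ * gaussSum χ φ = ∑ u, ∑ y, χ (u * y) * φ y * ψ u := by
  simp only [gaussSum, Finset.sum_mul_sum, map_mul]
  exact Finset.sum_congr rfl fun _ _ ↦ Finset.sum_congr rfl fun _ _ ↦ by ring

lemma DirichletCharacter.IsPrimitive.ne_one {R : Type*} [CommMonoidWithZero R] {n : ℕ}
    [NeZero n] {χ : DirichletCharacter R n} (hχ : χ.IsPrimitive) (hn : n ≠ 1) : χ ≠ 1 :=
  fun h ↦ hn (hχ ▸ eq_one_iff_conductor_eq_one.mp h)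

lemma DirichletCharacter.IsPrimitive.not_factorsThrough {R : Type*} [CommMonoidWithZero R]
    {n : ℕ} {χ : DirichletCharacter R n} (hχ : χ.IsPrimitive) {d : ℕ} (hd : d < n) :
    ¬ χ.FactorsThrough d :=
  fun h ↦ hd.not_ge (hχ ▸ Nat.sInf_le h)

namespace ZMod

lemma intCast_one_add_mul_eq_of_modEq {n : ℕ} {a b : ℤ} (h : a ≡ b [ZMOD n]) :
    ((1 + n * a : ℤ) : ZMod (n ^ 2)) = ((1 + n * b : ℤ) : ZMod (n ^ 2)) := by
  rw [intCast_eq_intCast_iff, Nat.cast_pow, sq]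
  exact (h.mul_left' (c := n)).add_left 1

lemma intCast_one_add_sq_mul (n : ℕ) (a : ℤ) : ((1 + n ^ 2 * a : ℤ) : ZMod (n ^ 2)) = 1 := by
  push_cast
  rw [← Nat.cast_pow, natCast_self, zero_mul, add_zero]

variable {n : ℕ} [NeZero n]

lemma intCast_one_add_mul_eq_of_intCast_eq {k : ℤ} {a : ZMod n} (h : (k : ZMod n) = a) :
    ((1 + n * k : ℤ) : ZMod (n ^ 2)) = ((1 + n * a.val : ℤ) : ZMod (n ^ 2)) :=
  intCast_one_add_mul_eq_of_modEq <| (intCast_eq_intCast_iff _ _ _).mp <| by simp [h]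

lemma exists_eq_intCast_one_add_mul_val {x : ZMod (n ^ 2)}
    (hx : castHom (dvd_pow_self n two_ne_zero) (ZMod n) x = 1) :
    ∃ a : ZMod n, x = ((1 + n * a.val : ℤ) : ZMod (n ^ 2)) := by
  have hval : ((1 : ℤ) : ZMod n) = ((x.val : ℤ) : ZMod n) := by
    rw [castHom_apply, cast_eq_val] at hx
    rw [Int.cast_one, Int.cast_natCast, hx]
  obtain ⟨m, hm⟩ := (intCast_eq_intCast_iff_dvd_sub _ _ _).mp hval
  refine ⟨m, ?_⟩
  rw [← intCast_one_add_mul_eq_of_intCast_eq rfl, ← hm]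
  simp

end ZMod

namespace MulChar

variable {R : Type*} [CommMonoidWithZero R] (n : ℕ) [NeZero n]

def oneAddMulAddChar (χ : MulChar (ZMod (n ^ 2)) R) : AddChar (ZMod n) R where
  toFun a := χ ((1 + n * a.val : ℤ) : ZMod (n ^ 2))
  map_zero_eq_one' := by simp
  map_add_eq_mul' a b := by
    have hn : (n : ZMod (n ^ 2)) ^ 2 = 0 := by rw [← Nat.cast_pow, ZMod.natCast_self]
    rw [← map_mul, ← ZMod.intCast_one_add_mul_eq_of_intCast_eq (k := a.val + b.val) (by simp)]
    congr 1
    push_cast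
    linear_combination (-(a.val * b.val : ZMod (n ^ 2))) * hn

lemma oneAddMulAddChar_apply (χ : MulChar (ZMod (n ^ 2)) R) (a : ZMod n) :
    χ.oneAddMulAddChar n a = χ ((1 + n * a.val : ℤ) : ZMod (n ^ 2)) := rfl

lemma oneAddMulAddChar_neg_apply (χ : MulChar (ZMod (n ^ 2)) R) (a : ZMod n) :
    χ.oneAddMulAddChar n (-a) = χ ((1 - n * a.val : ℤ) : ZMod (n ^ 2)) := by
  rw [oneAddMulAddChar_apply, ← ZMod.intCast_one_add_mul_eq_of_intCast_eq (k := -a.val) (by simp)]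
  ring_nf

end MulChar

lemma DirichletCharacter.oneAddMulAddChar_ne_one {R : Type*} [CommMonoidWithZero R] {n : ℕ}
    [NeZero n] {χ : DirichletCharacter R (n ^ 2)} (hχ : χ.IsPrimitive) (hn : n ≠ 1) :
    χ.oneAddMulAddChar n ≠ 1 := by
  intro h
  have hn2 : n < n ^ 2 := lt_self_pow₀ (by have := NeZero.ne n; omega) one_lt_two
  refine hχ.not_factorsThrough hn2 ?_
  rw [factorsThrough_iff_ker_unitsMap (dvd_pow_self n two_ne_zero)]
  intro x hx
  obtain ⟨a, ha⟩ := ZMod.exists_eq_intCast_one_add_mul_val (congrArg Units.val hx)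
  rw [MonoidHom.mem_ker]
  ext
  rw [MulChar.coe_toUnitHom, ha, ← MulChar.oneAddMulAddChar_apply, h, AddChar.one_apply,
    Units.val_one]

/-- For p prime, χ primitive modulo p² and ψ primitive modulo p, the bound
|∑_{u,y ∈ ℤ/pℤ} ψ(uy) · χ(1+pỹ) · χ(1−pũ) · conj(χ)(1+p²ũỹ)| ≤ p holds,
where ũ, ỹ ∈ {0,…,p−1} are the representatives of u and y and the arguments of
χ are taken in ℤ/p²ℤ. -/
theorem conj_char_sum_bound (p : ℕ) [Fact p.Prime]
    (χ : DirichletCharacter ℂ (p ^ 2)) (hχ : χ.IsPrimitive)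
    (ψ : DirichletCharacter ℂ p) (hψ : ψ.IsPrimitive) :
    ‖(∑ u : ZMod p, ∑ y : ZMod p,
      ψ (u * y) * χ (((1 + (p : ℤ) * (y.val : ℤ) : ℤ) : ZMod (p ^ 2))) *
        χ (((1 - (p : ℤ) * (u.val : ℤ) : ℤ) : ZMod (p ^ 2))) *
        (starRingEnd ℂ)
          (χ (((1 + (p : ℤ) ^ 2 * (u.val : ℤ) * (y.val : ℤ) : ℤ) : ZMod (p ^ 2)))))‖ ≤ p := by
  have hp : p ≠ 1 := (Fact.out : p.Prime).ne_one
  set E := χ.oneAddMulAddChar p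
  have hψ1 : ψ ≠ 1 := hψ.ne_one hp
  have hE : E ≠ 1 := oneAddMulAddChar_ne_one hχ hp
  calc _ = ‖gaussSum ψ E⁻¹ * gaussSum ψ E‖ := by
        rw [gaussSum_mul_gaussSum_eq_sum_sum]
        simp only [AddChar.inv_apply, E, MulChar.oneAddMulAddChar_neg_apply]
        simp only [MulChar.oneAddMulAddChar_apply, mul_assoc ((p : ℤ) ^ 2),
          ZMod.intCast_one_add_sq_mul, map_one, mul_one]
    _ = √(p : ℝ) * √(p : ℝ) := by
        rw [norm_mul, norm_gaussSum_eq_sqrt_card hψ1 (.of_ne_one (inv_ne_one.mpr hE)),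
          norm_gaussSum_eq_sqrt_card hψ1 (.of_ne_one hE), ZMod.card]
    _ ≤ p := (Real.mul_self_sqrt (Nat.cast_nonneg p)).le
end

section
/- Let p be a prime, k ≥ 1, q = p^k, let χ and ψ both be primitive Dirichlet characters modulo q, and let m₁, m₂, m₃, r be powers of p (nonnegative integer exponents) with gcd(m₁, r) = 1. Then Ĥ(ψ, χ, m₁, m₂, m₃, r) = 0 unless m₁ = m₂ = m₃ = r = 1, and in that case Ĥ(ψ, χ, 1, 1, 1, 1) = τ(conj(ψ)) · g(χ, ψ). -/
/-- Ĥ(ψ,χ,m₁,m₂,m₃,r) = ∑_{t,u,v ∈ ℤ/qℤ} χ(t+m₂u)·conj(χ)(rt+m₁m₂)·conj(χ)(u)·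
χ(−m₁+ru)·e_q(m₃·(vt)̃)·conj(ψ)(v). -/
noncomputable def Hhat {q : ℕ} [NeZero q] (ψ χ : DirichletCharacter ℂ q)
    (m₁ m₂ m₃ r : ℤ) : ℂ :=
  ∑ t : ZMod q, ∑ u : ZMod q, ∑ v : ZMod q,
    χ (t + (m₂ : ZMod q) * u) * (starRingEnd ℂ) (χ ((r : ZMod q) * t + ((m₁ * m₂ : ℤ) : ZMod q))) *
      (starRingEnd ℂ) (χ u) * χ (-(m₁ : ZMod q) + (r : ZMod q) * u) *
      eN q (m₃ * (((v * t)).val : ℤ)) * (starRingEnd ℂ) (ψ v)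

/-- The Gauss sum τ(f) = ∑_{v ∈ ℤ/qℤ} f(v)·e_q(ṽ). -/
noncomputable def gaussSumE (q : ℕ) [NeZero q] (f : ZMod q → ℂ) : ℂ :=
  ∑ v : ZMod q, f v * eN q (v.val : ℤ)

/-!
Summing over `v` first, the inner sum is a twisted Gauss sum of the primitive character `conj ψ`,
equal to `ψ(m₃ t) τ(conj ψ)`; hence `Ĥ = τ(conj ψ) ψ(m₃) K(m₁, m₂, r)` for a double sum `K` over
`t, u`. Primitivity of `ψ` modulo `p^k` yields a unit `w ≡ 1 (mod p^(k-1))` with `ψ(w) ≠ 1`, and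
such a `w` fixes every multiple of `p`. If `p ∣ m₃` this forces `ψ(m₃) = 0`; if `p` divides `m₁`,
`m₂` or `r`, rescaling `t` (and `u`) by `w` multiplies `K` by `ψ(w)`, so `K = 0`. Finally the
substitution `(t, u) ↦ (ut - 1, t + 1)` identifies `K(1, 1, 1)` with `g(χ, ψ)`.
-/

open Finset

lemma MulChar.eq_zero_of_mul_eq {M R : Type*} [CommMonoid M] [CommRing R]
    [IsDomain R] (χ : MulChar M R) {w a : M} (hw : χ w ≠ 1) (h : w * a = a) :
    χ a = 0 := by
  have h' := congrArg χ h
  rw [map_mul] at h'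
  exact (mul_left_eq_self₀.1 h').resolve_left hw

lemma mul_pow_eq_of_mul_eq {M : Type*} [Monoid M] {x y : M} (h : x * y = y) {a : ℕ}
    (ha : a ≠ 0) : x * y ^ a = y ^ a := by
  obtain ⟨b, rfl⟩ := Nat.exists_eq_succ_of_ne_zero ha
  rw [pow_succ', ← mul_assoc, h]

lemma Fintype.sum_sum_eq_zero_of_apply_units_mul {M R : Type*} [CommMonoid M] [Fintype M]
    [CommRing R] [IsDomain R] (F : M → M → R) (a b : Mˣ) {c : R} (hc : c ≠ 1)
    (h : ∀ t u, F (a * t) (b * u) = c * F t u) : ∑ t, ∑ u, F t u = 0 := by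
  have hinv : ∑ t, ∑ u, F (a * t) (b * u) = ∑ t, ∑ u, F t u :=
    calc ∑ t, ∑ u, F (a * t) (b * u) = ∑ t, ∑ u, F (a * t) u :=
          Finset.sum_congr rfl fun t _ => Fintype.sum_equiv (Units.mulLeft b) _ _ fun _ => rfl
      _ = ∑ t, ∑ u, F t u := Fintype.sum_equiv (Units.mulLeft a) _ _ fun _ => rfl
  simp_rw [h, ← mul_sum] at hinv
  exact (mul_left_eq_self₀.1 hinv).resolve_left hc

lemma DirichletCharacter.mul_conj_apply_of_isUnit_s9 {q : ℕ} (χ : DirichletCharacter ℂ q)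
    {x : ZMod q} (hx : IsUnit x) : χ x * (starRingEnd ℂ) (χ x) = 1 := by
  obtain ⟨u, rfl⟩ := hx
  rw [Complex.mul_conj, Complex.normSq_eq_norm_sq, χ.unit_norm_eq_one]
  norm_num

section UnitsMap

variable {n : ℕ} [NeZero n]

lemma ZMod.mul_natCast_eq_of_unitsMap_eq_one {d c : ℕ} (hd : d ∣ n) (hdc : n ∣ d * c)
    {u : (ZMod n)ˣ} (hu : ZMod.unitsMap hd u = 1) : (u : ZMod n) * c = c := by
  rw [← Units.val_inj, Units.val_one, ZMod.unitsMap_val, ZMod.cast_eq_val, ← Nat.cast_one,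
    ZMod.natCast_eq_natCast_iff] at hu
  have h := (ZMod.natCast_eq_natCast_iff _ _ n).2 ((hu.mul_right' c).of_dvd hdc)
  simpa using h

lemma DirichletCharacter.exists_unitsMap_eq_one_apply_ne_one {R : Type*} [CommMonoidWithZero R]
    {χ : DirichletCharacter R n} (hχ : χ.IsPrimitive) {d : ℕ} (hd : d ∣ n) (hdn : d < n) :
    ∃ u : (ZMod n)ˣ, ZMod.unitsMap hd u = 1 ∧ χ u ≠ 1 := by
  have hnot : ¬ χ.FactorsThrough d := fun h => (Nat.sInf_le h).not_gt (hχ ▸ hdn)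
  rw [DirichletCharacter.factorsThrough_iff_ker_unitsMap hd, SetLike.not_le_iff_exists] at hnot
  obtain ⟨u, hu, hχu⟩ := hnot
  refine ⟨u, hu, fun h => hχu ?_⟩
  rw [MonoidHom.mem_ker, ← Units.val_inj, MulChar.coe_toUnitHom, h, Units.val_one]

end UnitsMap

section CharacterSums

variable {q : ℕ} [NeZero q] (χ ψ : DirichletCharacter ℂ q)

noncomputable def HhatReduced (m₁ m₂ r : ZMod q) : ℂ :=
  ∑ t : ZMod q, ∑ u : ZMod q, χ (t + m₂ * u) * (starRingEnd ℂ) (χ (r * t + m₁ * m₂)) *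
    (starRingEnd ℂ) (χ u) * χ (-m₁ + r * u) * ψ t

lemma eN_eq_stdAddChar (x : ℤ) : eN q x = ZMod.stdAddChar (x : ZMod q) :=
  (ZMod.stdAddChar_coe x).symm

lemma gaussSumE_conj_eq_gaussSum_inv :
    gaussSumE q (fun v => (starRingEnd ℂ) (ψ v)) = gaussSum ψ⁻¹ ZMod.stdAddChar := by
  refine sum_congr rfl fun v _ => ?_
  dsimp only
  rw [starRingEnd_apply, MulChar.star_apply', eN_eq_stdAddChar]
  simp

variable {ψ} in
lemma sum_eN_mul_val_mul_conj (hψ : ψ.IsPrimitive) (m : ℤ) (t : ZMod q) :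
    ∑ v : ZMod q, eN q (m * ((v * t).val : ℤ)) * (starRingEnd ℂ) (ψ v) =
      ψ (m * t) * gaussSumE q (fun v => (starRingEnd ℂ) (ψ v)) := by
  have hψ' : ψ⁻¹.IsPrimitive := (DirichletCharacter.conductor_inv ψ).trans hψ
  have h := gaussSum_mulShift_of_isPrimitive ZMod.stdAddChar hψ' (m * t)
  rw [inv_inv] at h
  rw [gaussSumE_conj_eq_gaussSum_inv, ← h]
  refine sum_congr rfl fun v _ => ?_
  rw [starRingEnd_apply, MulChar.star_apply', eN_eq_stdAddChar, AddChar.mulShift_apply]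
  push_cast
  rw [ZMod.natCast_zmod_val, mul_comm v t, ← mul_assoc, mul_comm]

variable {ψ} in
lemma Hhat_eq_gaussSumE_mul_HhatReduced (hψ : ψ.IsPrimitive) (m₁ m₂ m₃ r : ℤ) :
    Hhat ψ χ m₁ m₂ m₃ r =
      gaussSumE q (fun v => (starRingEnd ℂ) (ψ v)) * ψ m₃ * HhatReduced χ ψ m₁ m₂ r := by
  simp only [Hhat, HhatReduced, mul_sum]
  refine sum_congr rfl fun t _ => sum_congr rfl fun u _ => ?_
  simp only [mul_assoc, ← mul_sum, sum_eN_mul_val_mul_conj hψ, map_mul]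
  push_cast
  ring

variable {χ ψ} {w : (ZMod q)ˣ} {m₁ m₂ r : ZMod q}

lemma HhatReduced_eq_zero_of_mul_m₁_eq (hw : ψ w ≠ 1) (h : w * m₁ = m₁) :
    HhatReduced χ ψ m₁ m₂ r = 0 := by
  refine Fintype.sum_sum_eq_zero_of_apply_units_mul _ w w hw fun t u => ?_
  have hχw := χ.mul_conj_apply_of_isUnit_s9 w.isUnit
  rw [show (w * t + m₂ * (w * u) : ZMod q) = w * (t + m₂ * u) by ring,
    show r * (w * t) + m₁ * m₂ = w * (r * t + m₁ * m₂) by linear_combination -m₂ * h,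
    show -m₁ + r * (w * u) = w * (-m₁ + r * u) by linear_combination h]
  simp only [map_mul]
  linear_combination (χ w * (starRingEnd ℂ) (χ w) + 1) * ψ w * (χ (t + m₂ * u) *
    (starRingEnd ℂ) (χ (r * t + m₁ * m₂)) * (starRingEnd ℂ) (χ u) * χ (-m₁ + r * u) * ψ t) * hχw

lemma HhatReduced_eq_zero_of_mul_m₂_eq (hw : ψ w ≠ 1) (h : w * m₂ = m₂) :
    HhatReduced χ ψ m₁ m₂ r = 0 := by
  refine Fintype.sum_sum_eq_zero_of_apply_units_mul _ w 1 hw fun t u => ?_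
  have hχw := χ.mul_conj_apply_of_isUnit_s9 w.isUnit
  rw [Units.val_one, one_mul,
    show (w * t + m₂ * u : ZMod q) = w * (t + m₂ * u) by linear_combination -u * h,
    show r * (w * t) + m₁ * m₂ = w * (r * t + m₁ * m₂) by linear_combination -m₁ * h]
  simp only [map_mul]
  linear_combination ψ w * (χ (t + m₂ * u) * (starRingEnd ℂ) (χ (r * t + m₁ * m₂)) *
    (starRingEnd ℂ) (χ u) * χ (-m₁ + r * u) * ψ t) * hχw

lemma HhatReduced_eq_zero_of_mul_r_eq (hw : ψ w ≠ 1) (h : w * r = r) :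
    HhatReduced χ ψ m₁ m₂ r = 0 := by
  refine Fintype.sum_sum_eq_zero_of_apply_units_mul _ w w hw fun t u => ?_
  have hχw := χ.mul_conj_apply_of_isUnit_s9 w.isUnit
  rw [show (w * t + m₂ * (w * u) : ZMod q) = w * (t + m₂ * u) by ring,
    show r * (w * t) + m₁ * m₂ = r * t + m₁ * m₂ by linear_combination t * h,
    show -m₁ + r * (w * u) = -m₁ + r * u by linear_combination u * h]
  simp only [map_mul]
  linear_combination ψ w * (χ (t + m₂ * u) * (starRingEnd ℂ) (χ (r * t + m₁ * m₂)) *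
    (starRingEnd ℂ) (χ u) * χ (-m₁ + r * u) * ψ t) * hχw

variable (χ ψ) in
lemma HhatReduced_one_one_one : HhatReduced χ ψ 1 1 1 = gSum χ ψ := by
  set K : ZMod q → ZMod q → ℂ := fun T Y =>
    χ (T + Y) * (starRingEnd ℂ) (χ (T + 1)) * (starRingEnd ℂ) (χ Y) * χ (-1 + Y) * ψ T
  have hK : HhatReduced χ ψ 1 1 1 = ∑ t : ZMod q, ∑ T : ZMod q, K T (t + 1) := by
    simp only [HhatReduced, one_mul, mul_one]
    rw [sum_comm]
    exact (Fintype.sum_equiv (Equiv.addRight 1) (fun t => ∑ T, K T (t + 1)) _ fun _ => rfl).symm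
  rw [hK, gSum]
  refine sum_congr rfl fun t _ => ?_
  by_cases ht : IsUnit t
  · obtain ⟨s, rfl⟩ := ht
    rw [← Fintype.sum_equiv ((Units.mulRight s).trans (Equiv.subRight 1))
      (fun u => K (u * s - 1) (s + 1)) _ fun _ => rfl]
    refine sum_congr rfl fun u _ => ?_
    have hχs := χ.mul_conj_apply_of_isUnit_s9 s.isUnit
    simp only [K]
    rw [show u * s - 1 + (s + 1) = s * (u + 1) by ring, show u * s - 1 + 1 = u * s by ring,
      show -1 + (s + 1) = (s : ZMod q) by ring]
    simp only [map_mul]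
    linear_combination χ s * (starRingEnd ℂ) (χ (s + 1)) * (starRingEnd ℂ) (χ u) * χ (u + 1) *
      ψ (u * s - 1) * hχs
  · simp [K, χ.map_nonunit ht]

end CharacterSums

theorem Hhat_eval_psi_primitive_general (p : ℕ) [Fact p.Prime] (k : ℕ) (hk : 1 ≤ k)
    (χ ψ : DirichletCharacter ℂ (p ^ k)) (hψ : ψ.IsPrimitive)
    (m₁ m₂ m₃ r : ℤ)
    (h₁ : ∃ a : ℕ, m₁ = (p : ℤ) ^ a) (h₂ : ∃ a : ℕ, m₂ = (p : ℤ) ^ a)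
    (h₃ : ∃ a : ℕ, m₃ = (p : ℤ) ^ a) (hr : ∃ a : ℕ, r = (p : ℤ) ^ a) :
    (¬(m₁ = 1 ∧ m₂ = 1 ∧ m₃ = 1 ∧ r = 1) → Hhat ψ χ m₁ m₂ m₃ r = 0) ∧
      Hhat ψ χ 1 1 1 1 =
        gaussSumE (p ^ k) (fun v => (starRingEnd ℂ) (ψ v)) * gSum χ ψ := by
  have hp : p.Prime := Fact.out
  obtain ⟨w, hw, hψw⟩ := ψ.exists_unitsMap_eq_one_apply_ne_one hψ
    (pow_dvd_pow p (Nat.sub_le k 1)) (Nat.pow_lt_pow_right hp.one_lt (by omega))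
  have hwp : (w : ZMod (p ^ k)) * p = p :=
    ZMod.mul_natCast_eq_of_unitsMap_eq_one _ (by rw [← pow_succ, Nat.sub_add_cancel hk]) hw
  have hw_fix : ∀ m : ℤ, (∃ a : ℕ, m = (p : ℤ) ^ a) → m ≠ 1 → (w : ZMod (p ^ k)) * m = m := by
    rintro m ⟨a, rfl⟩ hm
    push_cast
    exact mul_pow_eq_of_mul_eq hwp (by rintro rfl; simp at hm)
  refine ⟨fun hne => ?_, ?_⟩
  · rw [Hhat_eq_gaussSumE_mul_HhatReduced χ hψ]
    simp only [not_and_or] at hne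
    rcases hne with h | h | h | h
    · rw [HhatReduced_eq_zero_of_mul_m₁_eq hψw (hw_fix m₁ h₁ h), mul_zero]
    · rw [HhatReduced_eq_zero_of_mul_m₂_eq hψw (hw_fix m₂ h₂ h), mul_zero]
    · rw [ψ.eq_zero_of_mul_eq hψw (hw_fix m₃ h₃ h), mul_zero, zero_mul]
    · rw [HhatReduced_eq_zero_of_mul_r_eq hψw (hw_fix r hr h), mul_zero]
  · rw [Hhat_eq_gaussSumE_mul_HhatReduced χ hψ]
    simp [HhatReduced_one_one_one]

/-- For q = p^k (k ≥ 1), χ, ψ primitive modulo q, and m₁, m₂, m₃, r powers of p with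
gcd(m₁,r) = 1: Ĥ(ψ,χ,m₁,m₂,m₃,r) vanishes unless m₁ = m₂ = m₃ = r = 1, and
Ĥ(ψ,χ,1,1,1,1) = τ(conj(ψ))·g(χ,ψ). -/
theorem Hhat_eval_psi_primitive (p : ℕ) [Fact p.Prime] (k : ℕ) (hk : 1 ≤ k)
    (χ ψ : DirichletCharacter ℂ (p ^ k)) (hχ : χ.IsPrimitive) (hψ : ψ.IsPrimitive)
    (m₁ m₂ m₃ r : ℤ)
    (h₁ : ∃ a : ℕ, m₁ = (p : ℤ) ^ a) (h₂ : ∃ a : ℕ, m₂ = (p : ℤ) ^ a)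
    (h₃ : ∃ a : ℕ, m₃ = (p : ℤ) ^ a) (hr : ∃ a : ℕ, r = (p : ℤ) ^ a)
    (hcop : Int.gcd m₁ r = 1) :
    (¬(m₁ = 1 ∧ m₂ = 1 ∧ m₃ = 1 ∧ r = 1) → Hhat ψ χ m₁ m₂ m₃ r = 0) ∧
      Hhat ψ χ 1 1 1 1 =
        gaussSumE (p ^ k) (fun v => (starRingEnd ℂ) (ψ v)) * gSum χ ψ :=
  Hhat_eval_psi_primitive_general p k hk χ ψ hψ m₁ m₂ m₃ r h₁ h₂ h₃ hr
end

section
/- Let χ be a primitive Dirichlet character modulo q, let m₁, m₂, m₃ be integers, and let r be a positive integer. Then H_χ(m₁, m₂, m₃, r) = H_χ(m₁, m₃, m₂, r), i.e., the sum H_χ is symmetric in its second and third arguments. -/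
/-- H_χ(m₁,m₂,m₃,r) = ∑_{t,u ∈ ℤ/qℤ} χ(t+m₂u)·conj(χ)(rt+m₁m₂)·conj(χ)(u)·
χ(−m₁+ru)·e_q(m₃·t̃). -/
noncomputable def Hchi {q : ℕ} [NeZero q] (χ : DirichletCharacter ℂ q)
    (m₁ m₂ m₃ r : ℤ) : ℂ :=
  ∑ t : ZMod q, ∑ u : ZMod q,
    χ (t + (m₂ : ZMod q) * u) * (starRingEnd ℂ) (χ ((r : ZMod q) * t + ((m₁ * m₂ : ℤ) : ZMod q))) *
      (starRingEnd ℂ) (χ u) * χ (-(m₁ : ZMod q) + (r : ZMod q) * u) *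
      eN q (m₃ * (t.val : ℤ))

namespace HchiAux

open Finset

variable {q : ℕ} [NeZero q]

/-! ### Generic sum-reordering helpers -/

lemma swapA {M : Type*} [AddCommMonoid M] {ι : Type*} [Fintype ι] (f : ι → ι → ι → ι → M) :
    ∑ t, ∑ u, ∑ b, ∑ c, f t u b c = ∑ b, ∑ c, ∑ u, ∑ t, f t u b c := by
  calc ∑ t, ∑ u, ∑ b, ∑ c, f t u b c
      = ∑ u, ∑ t, ∑ b, ∑ c, f t u b c := Finset.sum_comm
    _ = ∑ u, ∑ b, ∑ t, ∑ c, f t u b c :=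
        Finset.sum_congr rfl fun u _ => Finset.sum_comm
    _ = ∑ u, ∑ b, ∑ c, ∑ t, f t u b c :=
        Finset.sum_congr rfl fun u _ => Finset.sum_congr rfl fun b _ => Finset.sum_comm
    _ = ∑ b, ∑ u, ∑ c, ∑ t, f t u b c := Finset.sum_comm
    _ = ∑ b, ∑ c, ∑ u, ∑ t, f t u b c :=
        Finset.sum_congr rfl fun b _ => Finset.sum_comm

lemma swapB {M : Type*} [AddCommMonoid M] {ι : Type*} [Fintype ι] (f : ι → ι → ι → ι → M) :
    ∑ b, ∑ c, ∑ a, ∑ d, f b c a d = ∑ d, ∑ c, ∑ b, ∑ a, f b c a d := by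
  calc ∑ b, ∑ c, ∑ a, ∑ d, f b c a d
      = ∑ b, ∑ c, ∑ d, ∑ a, f b c a d :=
        Finset.sum_congr rfl fun b _ => Finset.sum_congr rfl fun c _ => Finset.sum_comm
    _ = ∑ b, ∑ d, ∑ c, ∑ a, f b c a d :=
        Finset.sum_congr rfl fun b _ => Finset.sum_comm
    _ = ∑ d, ∑ b, ∑ c, ∑ a, f b c a d := Finset.sum_comm
    _ = ∑ d, ∑ c, ∑ b, ∑ a, f b c a d :=
        Finset.sum_congr rfl fun d _ => Finset.sum_comm

lemma sum_sum_bij {M : Type*} [AddCommMonoid M] {ι : Type*} [Fintype ι]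
    (f g : ι → ι → M) (σ : ι × ι → ι × ι) (hσ : Function.Bijective σ)
    (h : ∀ b a, f b a = g (σ (b, a)).1 (σ (b, a)).2) :
    ∑ b, ∑ a, f b a = ∑ b, ∑ a, g b a := by
  rw [← Fintype.sum_prod_type', ← Fintype.sum_prod_type']
  exact Fintype.sum_bijective σ hσ _ _ fun p => h p.1 p.2

/-! ### Additive character helpers -/

lemma psi_merge2 (ψ : AddChar (ZMod q) ℂ) {A1 A2 B : ZMod q} (h : A1 + A2 = B) :
    ψ A1 * ψ A2 = ψ B := by
  rw [← AddChar.map_add_eq_mul, h]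

lemma psi_merge3 (ψ : AddChar (ZMod q) ℂ) {A1 A2 A3 B : ZMod q} (h : A1 + A2 + A3 = B) :
    ψ A1 * ψ A2 * ψ A3 = ψ B := by
  rw [← AddChar.map_add_eq_mul, ← AddChar.map_add_eq_mul, h]

lemma psi_star (z : ZMod q) :
    star (ZMod.stdAddChar z : ℂ) = ZMod.stdAddChar (-z) := by
  have h1 : ZMod.stdAddChar z * ZMod.stdAddChar (-z) = 1 := by
    rw [← AddChar.map_add_eq_mul, add_neg_cancel, AddChar.map_zero_eq_one]
  have h2 : ‖(ZMod.stdAddChar z : ℂ)‖ = 1 := by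
    rw [ZMod.stdAddChar_apply]
    exact Circle.norm_coe _
  have h3 : star (ZMod.stdAddChar z : ℂ) = (ZMod.stdAddChar z : ℂ)⁻¹ := by
    rw [RCLike.inv_eq_conj h2]; rfl
  rw [h3]
  exact inv_eq_of_mul_eq_one_right h1

variable (χ : DirichletCharacter ℂ q)

/-- Gauss inversion: for primitive χ, `∑ a, χ(a) ψ(a n) = χ⁻¹(n) τ`. -/
lemma K1 (hχ : χ.IsPrimitive) (n : ZMod q) :
    ∑ a : ZMod q, χ a * ZMod.stdAddChar (a * n)
      = χ⁻¹ n * gaussSum χ ZMod.stdAddChar := by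
  rw [← gaussSum_mulShift_of_isPrimitive ZMod.stdAddChar hχ n]
  unfold gaussSum
  exact Finset.sum_congr rfl fun a _ => by rw [AddChar.mulShift_apply, mul_comm a n]

/-- Conjugate Gauss inversion: `∑ a, χ⁻¹(a) ψ(a n) = χ(n) κ` with
`κ = χ(-1) conj(τ)`. -/
lemma K1' (hχ : χ.IsPrimitive) (n : ZMod q) :
    ∑ a : ZMod q, χ⁻¹ a * ZMod.stdAddChar (a * n)
      = χ n * (χ (-1) * (starRingEnd ℂ) (gaussSum χ ZMod.stdAddChar)) := by
  have h := congrArg (starRingEnd ℂ) (K1 χ hχ (-n))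
  rw [map_sum] at h
  simp only [map_mul, starRingEnd_apply, MulChar.star_apply', inv_inv, mul_neg,
    psi_star, neg_neg] at h
  rw [h, show (-n : ZMod q) = (-1) * n by ring, map_mul, starRingEnd_apply]
  ring

lemma tau_ne_zero (hχ : χ.IsPrimitive) : gaussSum χ ZMod.stdAddChar ≠ 0 := by
  intro h
  have h2 : ZMod.dft (⇑χ) = 0 := by
    funext k
    rw [DirichletCharacter.IsPrimitive.fourierTransform_eq_inv_mul_gaussSum hχ k, h, mul_zero]
    rfl
  have h3 : (⇑χ) = 0 := by
    have := (ZMod.dft (E := ℂ)).map_eq_zero_iff.mp h2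
    exact this
  have h4 : χ (1 : ZMod q) = 0 := congrFun h3 1
  rw [map_one] at h4
  exact one_ne_zero h4

lemma kappa_ne_zero (hχ : χ.IsPrimitive) :
    χ (-1) * (starRingEnd ℂ) (gaussSum χ ZMod.stdAddChar) ≠ 0 := by
  have h1 : χ (-1 : ZMod q) ≠ 0 := by
    intro h
    have : χ (-1 : ZMod q) * χ (-1 : ZMod q) = 1 := by
      rw [← map_mul, neg_one_mul, neg_neg, map_one]
    rw [h, zero_mul] at this
    exact zero_ne_one this
  exact mul_ne_zero h1 (by simpa using tau_ne_zero χ hχ)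

/-! ### The main computation -/

/-- Step 1: `H·(τκ) = G₀·(τκ)`. -/
lemma L1 (hχ : χ.IsPrimitive) (M1 R x y : ZMod q) :
    (∑ t : ZMod q, ∑ u : ZMod q,
        χ (t + x*u) * χ⁻¹ (R*t + M1*x) * χ⁻¹ u * χ (R*u - M1) * ZMod.stdAddChar (y*t))
      * (gaussSum χ ZMod.stdAddChar *
          (χ (-1) * (starRingEnd ℂ) (gaussSum χ ZMod.stdAddChar)))
    = (∑ b : ZMod q, ∑ c : ZMod q,
        χ b * χ⁻¹ (b*R + y) * χ⁻¹ c * χ (c*R - x*(b*R + y)) *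
          ZMod.stdAddChar (M1*(x*b - c)))
      * (gaussSum χ ZMod.stdAddChar *
          (χ (-1) * (starRingEnd ℂ) (gaussSum χ ZMod.stdAddChar))) := by
  set ψ : AddChar (ZMod q) ℂ := ZMod.stdAddChar with hψdef
  set τ : ℂ := gaussSum χ ZMod.stdAddChar with hτdef
  set κ : ℂ := χ (-1) * (starRingEnd ℂ) (gaussSum χ ZMod.stdAddChar) with hκdef
  have hK1 : ∀ n : ZMod q, ∑ a : ZMod q, χ a * ψ (a * n) = χ⁻¹ n * τ := K1 χ hχ
  have hK1' : ∀ n : ZMod q, ∑ a : ZMod q, χ⁻¹ a * ψ (a * n) = χ n * κ := K1' χ hχ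
  calc (∑ t : ZMod q, ∑ u : ZMod q,
        χ (t + x*u) * χ⁻¹ (R*t + M1*x) * χ⁻¹ u * χ (R*u - M1) * ψ (y*t)) * (τ * κ)
      = ∑ t : ZMod q, ∑ u : ZMod q,
          (χ (t + x*u) * χ⁻¹ u * ψ (y*t)) * ((χ⁻¹ (R*t + M1*x) * τ) * (χ (R*u - M1) * κ)) := by
        rw [Finset.sum_mul]
        refine Finset.sum_congr rfl fun t _ => ?_
        rw [Finset.sum_mul]
        exact Finset.sum_congr rfl fun u _ => by ring
    _ = ∑ t : ZMod q, ∑ u : ZMod q,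
          (χ (t + x*u) * χ⁻¹ u * ψ (y*t)) *
            ((∑ b : ZMod q, χ b * ψ (b * (R*t + M1*x))) *
             (∑ c : ZMod q, χ⁻¹ c * ψ (c * (R*u - M1)))) := by
        refine Finset.sum_congr rfl fun t _ => Finset.sum_congr rfl fun u _ => ?_
        rw [hK1 (R*t + M1*x), hK1' (R*u - M1)]
    _ = ∑ t : ZMod q, ∑ u : ZMod q, ∑ b : ZMod q, ∑ c : ZMod q,
          (χ (t + x*u) * χ⁻¹ u * ψ (y*t)) *
            ((χ b * ψ (b * (R*t + M1*x))) * (χ⁻¹ c * ψ (c * (R*u - M1)))) := by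
        refine Finset.sum_congr rfl fun t _ => Finset.sum_congr rfl fun u _ => ?_
        rw [Finset.sum_mul_sum, Finset.mul_sum]
        exact Finset.sum_congr rfl fun b _ => by rw [Finset.mul_sum]
    _ = ∑ b : ZMod q, ∑ c : ZMod q, ∑ u : ZMod q, ∑ t : ZMod q,
          (χ (t + x*u) * χ⁻¹ u * ψ (y*t)) *
            ((χ b * ψ (b * (R*t + M1*x))) * (χ⁻¹ c * ψ (c * (R*u - M1)))) := swapA _
    _ = ∑ b : ZMod q, ∑ c : ZMod q, ∑ u : ZMod q, ∑ t : ZMod q,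
          (χ b * χ⁻¹ c) * ((χ⁻¹ u * ψ (u * (c*R - x*(b*R + y)))) *
            (ψ (M1*(x*b - c)) * (χ t * ψ (t * (b*R + y))))) := by
        refine Finset.sum_congr rfl fun b _ => Finset.sum_congr rfl fun c _ =>
          Finset.sum_congr rfl fun u _ => ?_
        refine Fintype.sum_bijective (fun t => t + x*u) (Equiv.addRight (x*u)).bijective _ _
          fun t => ?_
        have key : ψ (y*t) * ψ (b * (R*t + M1*x)) * ψ (c * (R*u - M1))
            = ψ (u * (c*R - x*(b*R + y))) * ψ (M1*(x*b - c)) * ψ ((t + x*u) * (b*R + y)) := by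
          rw [psi_merge3 ψ rfl, psi_merge3 ψ rfl]
          exact congrArg ψ (by ring)
        linear_combination (χ (t + x*u) * χ⁻¹ u * χ b * χ⁻¹ c) * key
    _ = ∑ b : ZMod q, ∑ c : ZMod q,
          χ b * χ⁻¹ (b*R + y) * χ⁻¹ c * χ (c*R - x*(b*R + y)) * ψ (M1*(x*b - c)) * (τ * κ) := by
        refine Finset.sum_congr rfl fun b _ => Finset.sum_congr rfl fun c _ => ?_
        calc ∑ u : ZMod q, ∑ t : ZMod q,
              (χ b * χ⁻¹ c) * ((χ⁻¹ u * ψ (u * (c*R - x*(b*R + y)))) *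
                (ψ (M1*(x*b - c)) * (χ t * ψ (t * (b*R + y)))))
            = ∑ u : ZMod q,
                (χ⁻¹ u * ψ (u * (c*R - x*(b*R + y)))) *
                ((χ b * χ⁻¹ c) * (ψ (M1*(x*b - c)) * (χ⁻¹ (b*R + y) * τ))) := by
              refine Finset.sum_congr rfl fun u _ => ?_
              rw [← hK1 (b*R + y), Finset.mul_sum, Finset.mul_sum, Finset.mul_sum]
              exact Finset.sum_congr rfl fun t _ => by ring
          _ = (∑ u : ZMod q, χ⁻¹ u * ψ (u * (c*R - x*(b*R + y)))) *
                ((χ b * χ⁻¹ c) * (ψ (M1*(x*b - c)) * (χ⁻¹ (b*R + y) * τ))) := by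
              rw [Finset.sum_mul]
          _ = χ b * χ⁻¹ (b*R + y) * χ⁻¹ c * χ (c*R - x*(b*R + y)) * ψ (M1*(x*b - c)) *
                (τ * κ) := by
              rw [hK1' (c*R - x*(b*R + y))]
              ring
    _ = (∑ b : ZMod q, ∑ c : ZMod q,
          χ b * χ⁻¹ (b*R + y) * χ⁻¹ c * χ (c*R - x*(b*R + y)) * ψ (M1*(x*b - c))) * (τ * κ) := by
        rw [Finset.sum_mul]
        exact Finset.sum_congr rfl fun b _ => by rw [Finset.sum_mul]

/-- Step 2: `G₀·(τκ) = F`. -/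
lemma L2 (hχ : χ.IsPrimitive) (M1 R x y : ZMod q) :
    (∑ b : ZMod q, ∑ c : ZMod q,
        χ b * χ⁻¹ (b*R + y) * χ⁻¹ c * χ (c*R - x*(b*R + y)) * ZMod.stdAddChar (M1*(x*b - c)))
      * (gaussSum χ ZMod.stdAddChar *
          (χ (-1) * (starRingEnd ℂ) (gaussSum χ ZMod.stdAddChar)))
    = ∑ d : ZMod q, ∑ c : ZMod q, ∑ b : ZMod q, ∑ a : ZMod q,
        χ a * χ b * χ⁻¹ c * χ⁻¹ d *
          ZMod.stdAddChar (R*a*b + a*y + R*c*d - x*R*b*d - x*y*d + M1*x*b - M1*c) := by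
  set ψ : AddChar (ZMod q) ℂ := ZMod.stdAddChar with hψdef
  set τ : ℂ := gaussSum χ ZMod.stdAddChar with hτdef
  set κ : ℂ := χ (-1) * (starRingEnd ℂ) (gaussSum χ ZMod.stdAddChar) with hκdef
  have hK1 : ∀ n : ZMod q, ∑ a : ZMod q, χ a * ψ (a * n) = χ⁻¹ n * τ := K1 χ hχ
  have hK1' : ∀ n : ZMod q, ∑ a : ZMod q, χ⁻¹ a * ψ (a * n) = χ n * κ := K1' χ hχ
  calc (∑ b : ZMod q, ∑ c : ZMod q,
        χ b * χ⁻¹ (b*R + y) * χ⁻¹ c * χ (c*R - x*(b*R + y)) * ψ (M1*(x*b - c))) * (τ * κ)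
      = ∑ b : ZMod q, ∑ c : ZMod q,
          (χ b * χ⁻¹ c * ψ (M1*(x*b - c))) *
            ((χ⁻¹ (b*R + y) * τ) * (χ (c*R - x*(b*R + y)) * κ)) := by
        rw [Finset.sum_mul]
        refine Finset.sum_congr rfl fun b _ => ?_
        rw [Finset.sum_mul]
        exact Finset.sum_congr rfl fun c _ => by ring
    _ = ∑ b : ZMod q, ∑ c : ZMod q,
          (χ b * χ⁻¹ c * ψ (M1*(x*b - c))) *
            ((∑ a : ZMod q, χ a * ψ (a * (b*R + y))) *
             (∑ d : ZMod q, χ⁻¹ d * ψ (d * (c*R - x*(b*R + y))))) := by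
        refine Finset.sum_congr rfl fun b _ => Finset.sum_congr rfl fun c _ => ?_
        rw [hK1 (b*R + y), hK1' (c*R - x*(b*R + y))]
    _ = ∑ b : ZMod q, ∑ c : ZMod q, ∑ a : ZMod q, ∑ d : ZMod q,
          χ a * χ b * χ⁻¹ c * χ⁻¹ d *
            ψ (R*a*b + a*y + R*c*d - x*R*b*d - x*y*d + M1*x*b - M1*c) := by
        refine Finset.sum_congr rfl fun b _ => Finset.sum_congr rfl fun c _ => ?_
        rw [Finset.sum_mul_sum, Finset.mul_sum]
        refine Finset.sum_congr rfl fun a _ => ?_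
        rw [Finset.mul_sum]
        refine Finset.sum_congr rfl fun d _ => ?_
        have key : ψ (M1*(x*b - c)) * ψ (a * (b*R + y)) * ψ (d * (c*R - x*(b*R + y)))
            = ψ (R*a*b + a*y + R*c*d - x*R*b*d - x*y*d + M1*x*b - M1*c) := by
          rw [psi_merge3 ψ rfl]
          exact congrArg ψ (by ring)
        linear_combination (χ a * χ b * χ⁻¹ c * χ⁻¹ d) * key
    _ = ∑ d : ZMod q, ∑ c : ZMod q, ∑ b : ZMod q, ∑ a : ZMod q,
          χ a * χ b * χ⁻¹ c * χ⁻¹ d *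
            ψ (R*a*b + a*y + R*c*d - x*R*b*d - x*y*d + M1*x*b - M1*c) := swapB _

/-- Step 3: the fourfold sum `F` is symmetric in `x` and `y`. -/
lemma L3 (hχ : χ.IsPrimitive) (M1 R x y : ZMod q) :
    ∑ d : ZMod q, ∑ c : ZMod q, ∑ b : ZMod q, ∑ a : ZMod q,
        χ a * χ b * χ⁻¹ c * χ⁻¹ d *
          ZMod.stdAddChar (R*a*b + a*y + R*c*d - x*R*b*d - x*y*d + M1*x*b - M1*c)
    = ∑ d : ZMod q, ∑ c : ZMod q, ∑ b : ZMod q, ∑ a : ZMod q,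
        χ a * χ b * χ⁻¹ c * χ⁻¹ d *
          ZMod.stdAddChar (R*a*b + a*x + R*c*d - y*R*b*d - y*x*d + M1*y*b - M1*c) := by
  set ψ : AddChar (ZMod q) ℂ := ZMod.stdAddChar with hψdef
  have hK1' : ∀ n : ZMod q, ∑ a : ZMod q, χ⁻¹ a * ψ (a * n)
      = χ n * (χ (-1) * (starRingEnd ℂ) (gaussSum χ ZMod.stdAddChar)) := K1' χ hχ
  refine Finset.sum_congr rfl fun d _ => ?_
  by_cases hd : IsUnit (M1 - R*d)
  · -- good case: explicit involution on (b, a)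
    refine Finset.sum_congr rfl fun c _ => ?_
    have he : (M1 - R*d) * Ring.inverse (M1 - R*d) = 1 := Ring.mul_inverse_cancel _ hd
    have he' : Ring.inverse (M1 - R*d) * (M1 - R*d) = 1 := Ring.inverse_mul_cancel _ hd
    refine sum_sum_bij _ _
      (fun p => (p.2 * Ring.inverse (M1 - R*d), p.1 * (M1 - R*d))) ?_ ?_
    · refine Function.Involutive.bijective fun p => ?_
      ext
      · show p.1 * (M1 - R*d) * Ring.inverse (M1 - R*d) = p.1
        rw [mul_assoc, he, mul_one]
      · show p.2 * Ring.inverse (M1 - R*d) * (M1 - R*d) = p.2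
        rw [mul_assoc, he', mul_one]
    · intro b a
      dsimp only
      have harg : R*(b*(M1 - R*d))*(a * Ring.inverse (M1 - R*d)) + (b*(M1 - R*d))*x + R*c*d
            - y*R*(a * Ring.inverse (M1 - R*d))*d - y*x*d + M1*y*(a * Ring.inverse (M1 - R*d))
            - M1*c
          = R*a*b + a*y + R*c*d - x*R*b*d - x*y*d + M1*x*b - M1*c := by
        linear_combination (R*a*b + y*a) * he
      have h1 : χ (M1 - R*d) * χ (Ring.inverse (M1 - R*d)) = 1 := by
        rw [← map_mul, he, map_one]
      have hsplit1 : χ (a * Ring.inverse (M1 - R*d)) = χ a * χ (Ring.inverse (M1 - R*d)) :=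
        map_mul χ _ _
      have hsplit2 : χ (b * (M1 - R*d)) = χ b * χ (M1 - R*d) := map_mul χ _ _
      have hpsi : ψ (R*(b*(M1 - R*d))*(a * Ring.inverse (M1 - R*d)) + (b*(M1 - R*d))*x + R*c*d
            - y*R*(a * Ring.inverse (M1 - R*d))*d - y*x*d + M1*y*(a * Ring.inverse (M1 - R*d))
            - M1*c)
          = ψ (R*a*b + a*y + R*c*d - x*R*b*d - x*y*d + M1*x*b - M1*c) := congrArg ψ harg
      -- goal: term (x,y) at (b,a)  =  term (y,x) at (a·e⁻¹, b·e)
      have expand : χ (b*(M1 - R*d)) * χ (a * Ring.inverse (M1 - R*d)) =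
          χ a * χ b * (χ (M1 - R*d) * χ (Ring.inverse (M1 - R*d))) := by
        rw [hsplit1, hsplit2]; ring
      calc χ a * χ b * χ⁻¹ c * χ⁻¹ d *
            ψ (R*a*b + a*y + R*c*d - x*R*b*d - x*y*d + M1*x*b - M1*c)
          = χ a * χ b * (χ (M1 - R*d) * χ (Ring.inverse (M1 - R*d))) * χ⁻¹ c * χ⁻¹ d *
            ψ (R*a*b + a*y + R*c*d - x*R*b*d - x*y*d + M1*x*b - M1*c) := by
            rw [h1]; ring
        _ = χ (b*(M1 - R*d)) * χ (a * Ring.inverse (M1 - R*d)) * χ⁻¹ c * χ⁻¹ d *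
            ψ (R*(b*(M1 - R*d))*(a * Ring.inverse (M1 - R*d)) + (b*(M1 - R*d))*x + R*c*d
              - y*R*(a * Ring.inverse (M1 - R*d))*d - y*x*d
              + M1*y*(a * Ring.inverse (M1 - R*d)) - M1*c) := by
            rw [expand, hpsi]
  · -- bad case: both sides vanish
    have hRdM1 : ¬ IsUnit (R*d - M1) := by
      intro h
      exact hd (by simpa [neg_sub] using h.neg)
    have hzero : ∀ z w : ZMod q,
        (∑ c : ZMod q, ∑ b : ZMod q, ∑ a : ZMod q,
          χ a * χ b * χ⁻¹ c * χ⁻¹ d *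
            ψ (R*a*b + a*w + R*c*d - z*R*b*d - z*w*d + M1*z*b - M1*c)) = 0 := by
      intro z w
      have step : ∀ c : ZMod q, (∑ b : ZMod q, ∑ a : ZMod q,
          χ a * χ b * χ⁻¹ c * χ⁻¹ d *
            ψ (R*a*b + a*w + R*c*d - z*R*b*d - z*w*d + M1*z*b - M1*c))
          = (χ⁻¹ c * ψ (c * (R*d - M1))) *
            (∑ b : ZMod q, ∑ a : ZMod q,
              χ a * χ b * χ⁻¹ d * ψ (R*a*b + a*w - z*R*b*d - z*w*d + M1*z*b)) := by
        intro c
        rw [Finset.mul_sum]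
        refine Finset.sum_congr rfl fun b _ => ?_
        rw [Finset.mul_sum]
        refine Finset.sum_congr rfl fun a _ => ?_
        have key : ψ (c * (R*d - M1)) * ψ (R*a*b + a*w - z*R*b*d - z*w*d + M1*z*b)
            = ψ (R*a*b + a*w + R*c*d - z*R*b*d - z*w*d + M1*z*b - M1*c) := by
          rw [psi_merge2 ψ rfl]
          exact congrArg ψ (by ring)
        linear_combination (-(χ a * χ b * χ⁻¹ c * χ⁻¹ d)) * key
      calc (∑ c : ZMod q, ∑ b : ZMod q, ∑ a : ZMod q,
            χ a * χ b * χ⁻¹ c * χ⁻¹ d *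
              ψ (R*a*b + a*w + R*c*d - z*R*b*d - z*w*d + M1*z*b - M1*c))
          = ∑ c : ZMod q, (χ⁻¹ c * ψ (c * (R*d - M1))) *
              (∑ b : ZMod q, ∑ a : ZMod q,
                χ a * χ b * χ⁻¹ d * ψ (R*a*b + a*w - z*R*b*d - z*w*d + M1*z*b)) :=
            Finset.sum_congr rfl fun c _ => step c
        _ = (∑ c : ZMod q, χ⁻¹ c * ψ (c * (R*d - M1))) *
              (∑ b : ZMod q, ∑ a : ZMod q,
                χ a * χ b * χ⁻¹ d * ψ (R*a*b + a*w - z*R*b*d - z*w*d + M1*z*b)) := by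
            rw [Finset.sum_mul]
        _ = 0 := by
            rw [hK1' (R*d - M1), MulChar.map_nonunit χ hRdM1, zero_mul, zero_mul]
    rw [hzero x y, hzero y x]

/-- Symmetry of the generalized `H` sum. -/
lemma Hs_symm (hχ : χ.IsPrimitive) (M1 R x y : ZMod q) :
    (∑ t : ZMod q, ∑ u : ZMod q,
        χ (t + x*u) * χ⁻¹ (R*t + M1*x) * χ⁻¹ u * χ (R*u - M1) * ZMod.stdAddChar (y*t))
    = ∑ t : ZMod q, ∑ u : ZMod q,
        χ (t + y*u) * χ⁻¹ (R*t + M1*y) * χ⁻¹ u * χ (R*u - M1) * ZMod.stdAddChar (x*t) := by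
  have hne : gaussSum χ ZMod.stdAddChar *
      (χ (-1) * (starRingEnd ℂ) (gaussSum χ ZMod.stdAddChar)) ≠ 0 :=
    mul_ne_zero (tau_ne_zero χ hχ) (kappa_ne_zero χ hχ)
  apply mul_right_cancel₀ hne
  rw [L1 χ hχ M1 R x y, L2 χ hχ M1 R x y, L3 χ hχ M1 R x y,
    ← L2 χ hχ M1 R y x, ← L1 χ hχ M1 R y x]

lemma eN_eq (b : ℤ) (t : ZMod q) :
    eN q (b * (t.val : ℤ)) = ZMod.stdAddChar ((b : ZMod q) * t) := by
  have h : ((b : ZMod q) * t) = (((b * (t.val : ℤ)) : ℤ) : ZMod q) := by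
    push_cast [ZMod.natCast_val, ZMod.cast_id]
    ring
  rw [h, ZMod.stdAddChar_coe]
  rfl

lemma Hchi_eq (χ : DirichletCharacter ℂ q) (m₁ a b r : ℤ) :
    Hchi χ m₁ a b r
    = ∑ t : ZMod q, ∑ u : ZMod q,
        χ (t + (a : ZMod q)*u) *
          χ⁻¹ ((r : ZMod q)*t + ((m₁ : ZMod q))*((a : ZMod q))) * χ⁻¹ u *
          χ ((r : ZMod q)*u - (m₁ : ZMod q)) *
          ZMod.stdAddChar ((b : ZMod q)*t) := by
  unfold Hchi
  refine Finset.sum_congr rfl fun t _ => Finset.sum_congr rfl fun u _ => ?_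
  rw [starRingEnd_apply, starRingEnd_apply, MulChar.star_apply', MulChar.star_apply']
  rw [show ((m₁ * a : ℤ) : ZMod q) = (m₁ : ZMod q) * (a : ZMod q) by push_cast; ring]
  rw [neg_add_eq_sub, eN_eq b t]

end HchiAux

/-- For χ primitive modulo q, integers m₁, m₂, m₃ and a positive integer r,
H_χ is symmetric in its second and third arguments:
H_χ(m₁,m₂,m₃,r) = H_χ(m₁,m₃,m₂,r). -/
theorem Hchi_symm_m2_m3 {q : ℕ} [NeZero q] (χ : DirichletCharacter ℂ q)
    (hχ : χ.IsPrimitive) (m₁ m₂ m₃ : ℤ) (r : ℤ) (hr : 0 < r) :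
    Hchi χ m₁ m₂ m₃ r = Hchi χ m₁ m₃ m₂ r := by
  rw [HchiAux.Hchi_eq χ m₁ m₂ m₃ r, HchiAux.Hchi_eq χ m₁ m₃ m₂ r]
  exact HchiAux.Hs_symm χ hχ (m₁ : ZMod q) (r : ZMod q) (m₂ : ZMod q) (m₃ : ZMod q)
end

section
/- Let χ be a primitive Dirichlet character modulo q, let m₁, m₂, m₃ be integers, and let r be a positive integer with gcd(r, q) = 1. Then H_χ(m₁, m₂, m₃, r) = H_{conj(χ)}(m₂, m₁, m₃, r). -/
private lemma chi_mul_conj {q : ℕ} [NeZero q] (χ : DirichletCharacter ℂ q) {x : ZMod q}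
    (hx : IsUnit x) : χ x * (starRingEnd ℂ) (χ x) = 1 := by
  have h : ‖χ x‖ = 1 := by
    simpa using χ.unit_norm_eq_one hx.unit
  rw [Complex.mul_conj, Complex.normSq_eq_norm_sq, h]
  norm_num

private lemma map_facts {q : ℕ} [NeZero q] (R c₁ c₂ t u : ZMod q)
    (hD : IsUnit (R * t + c₁ * c₂)) (hu : IsUnit u) (hb : IsUnit (-c₁ + R * u))
    (h2 : IsUnit (t + c₂ * u)) :
    IsUnit ((t + c₂ * u) * (-c₁ + R * u)⁻¹)
    ∧ IsUnit (-c₂ + R * ((t + c₂ * u) * (-c₁ + R * u)⁻¹))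
    ∧ IsUnit (t + c₁ * ((t + c₂ * u) * (-c₁ + R * u)⁻¹))
    ∧ -c₂ + R * ((t + c₂ * u) * (-c₁ + R * u)⁻¹) = (R * t + c₁ * c₂) * (-c₁ + R * u)⁻¹
    ∧ t + c₁ * ((t + c₂ * u) * (-c₁ + R * u)⁻¹) = (R * t + c₁ * c₂) * u * (-c₁ + R * u)⁻¹
    ∧ (t + c₁ * ((t + c₂ * u) * (-c₁ + R * u)⁻¹))
        * (-c₂ + R * ((t + c₂ * u) * (-c₁ + R * u)⁻¹))⁻¹ = u := by
  have h1 : (-c₁ + R * u) * (-c₁ + R * u)⁻¹ = 1 := ZMod.mul_inv_of_unit _ hb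
  have hbinv : IsUnit ((-c₁ + R * u)⁻¹) :=
    IsUnit.of_mul_eq_one _ (ZMod.inv_mul_of_unit _ hb)
  have e2 : -c₂ + R * ((t + c₂ * u) * (-c₁ + R * u)⁻¹)
      = (R * t + c₁ * c₂) * (-c₁ + R * u)⁻¹ := by
    linear_combination c₂ * h1
  have e3 : t + c₁ * ((t + c₂ * u) * (-c₁ + R * u)⁻¹)
      = (R * t + c₁ * c₂) * u * (-c₁ + R * u)⁻¹ := by
    linear_combination (-t) * h1
  have hw : IsUnit (-c₂ + R * ((t + c₂ * u) * (-c₁ + R * u)⁻¹)) := e2 ▸ hD.mul hbinv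
  refine ⟨h2.mul hbinv, hw, e3 ▸ (hD.mul hu).mul hbinv, e2, e3, ?_⟩
  have e4 : t + c₁ * ((t + c₂ * u) * (-c₁ + R * u)⁻¹)
      = u * (-c₂ + R * ((t + c₂ * u) * (-c₁ + R * u)⁻¹)) := by
    rw [e3, e2]; ring
  rw [e4, mul_assoc, ZMod.mul_inv_of_unit _ hw, mul_one]

private lemma HchiInnerSum {q : ℕ} [NeZero q] (χ : DirichletCharacter ℂ q)
    (R c₁ c₂ t : ZMod q) :
    ∑ u : ZMod q, χ (t + c₂ * u) * (starRingEnd ℂ) (χ (R * t + c₁ * c₂)) *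
        (starRingEnd ℂ) (χ u) * χ (-c₁ + R * u)
    = ∑ u : ZMod q, (starRingEnd ℂ) (χ (t + c₁ * u)) * χ (R * t + c₁ * c₂) *
        χ u * (starRingEnd ℂ) (χ (-c₂ + R * u)) := by
  classical
  by_cases hD : IsUnit (R * t + c₁ * c₂)
  · have hL : ∀ u : ZMod q, u ∈ Finset.univ →
        χ (t + c₂ * u) * (starRingEnd ℂ) (χ (R * t + c₁ * c₂)) *
          (starRingEnd ℂ) (χ u) * χ (-c₁ + R * u) ≠ 0 →
        IsUnit u ∧ IsUnit (-c₁ + R * u) ∧ IsUnit (t + c₂ * u) := by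
      intro u _ hne
      refine ⟨?_, ?_, ?_⟩ <;> by_contra hx <;>
        exact hne (by simp [MulChar.map_nonunit χ hx])
    have hR : ∀ u : ZMod q, u ∈ Finset.univ →
        (starRingEnd ℂ) (χ (t + c₁ * u)) * χ (R * t + c₁ * c₂) *
          χ u * (starRingEnd ℂ) (χ (-c₂ + R * u)) ≠ 0 →
        IsUnit u ∧ IsUnit (-c₂ + R * u) ∧ IsUnit (t + c₁ * u) := by
      intro u _ hne
      refine ⟨?_, ?_, ?_⟩ <;> by_contra hx <;>
        exact hne (by simp [MulChar.map_nonunit χ hx])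
    rw [← Finset.sum_filter_of_ne hL, ← Finset.sum_filter_of_ne hR]
    refine Finset.sum_nbij' (fun u => (t + c₂ * u) * (-c₁ + R * u)⁻¹)
      (fun v => (t + c₁ * v) * (-c₂ + R * v)⁻¹) ?_ ?_ ?_ ?_ ?_
    · intro u hu
      simp only [Finset.mem_filter, Finset.mem_univ, true_and] at hu ⊢
      obtain ⟨hu, hb, h2⟩ := hu
      obtain ⟨v1, v2, v3, _⟩ := map_facts R c₁ c₂ t u hD hu hb h2
      exact ⟨v1, v2, v3⟩
    · intro v hv
      simp only [Finset.mem_filter, Finset.mem_univ, true_and] at hv ⊢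
      obtain ⟨hv, hb, h2⟩ := hv
      have hD' : IsUnit (R * t + c₂ * c₁) := by rwa [mul_comm c₂ c₁]
      obtain ⟨v1, v2, v3, _⟩ := map_facts R c₂ c₁ t v hD' hv hb h2
      exact ⟨v1, v2, v3⟩
    · intro u hu
      simp only [Finset.mem_filter, Finset.mem_univ, true_and] at hu
      obtain ⟨hu, hb, h2⟩ := hu
      obtain ⟨_, _, _, _, _, e6⟩ := map_facts R c₁ c₂ t u hD hu hb h2
      exact e6
    · intro v hv
      simp only [Finset.mem_filter, Finset.mem_univ, true_and] at hv
      obtain ⟨hv, hb, h2⟩ := hv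
      have hD' : IsUnit (R * t + c₂ * c₁) := by rwa [mul_comm c₂ c₁]
      obtain ⟨_, _, _, _, _, e6⟩ := map_facts R c₂ c₁ t v hD' hv hb h2
      exact e6
    · intro u hu
      simp only [Finset.mem_filter, Finset.mem_univ, true_and] at hu
      obtain ⟨hu, hb, h2⟩ := hu
      obtain ⟨_, _, _, e2, e3, _⟩ := map_facts R c₁ c₂ t u hD hu hb h2
      have hbinv : IsUnit ((-c₁ + R * u)⁻¹) :=
        IsUnit.of_mul_eq_one _ (ZMod.inv_mul_of_unit _ hb)
      show χ (t + c₂ * u) * (starRingEnd ℂ) (χ (R * t + c₁ * c₂)) *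
          (starRingEnd ℂ) (χ u) * χ (-c₁ + R * u)
        = (starRingEnd ℂ) (χ (t + c₁ * ((t + c₂ * u) * (-c₁ + R * u)⁻¹))) *
            χ (R * t + c₁ * c₂) * χ ((t + c₂ * u) * (-c₁ + R * u)⁻¹) *
            (starRingEnd ℂ) (χ (-c₂ + R * ((t + c₂ * u) * (-c₁ + R * u)⁻¹)))
      rw [e2, e3]
      have f3 : (starRingEnd ℂ) (χ ((-c₁ + R * u)⁻¹)) = χ (-c₁ + R * u) := by
        have g1 : χ ((-c₁ + R * u)⁻¹) * χ (-c₁ + R * u) = 1 := by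
          rw [← map_mul, ZMod.inv_mul_of_unit _ hb, map_one]
        have g2 := chi_mul_conj χ hbinv
        calc (starRingEnd ℂ) (χ ((-c₁ + R * u)⁻¹))
            = (starRingEnd ℂ) (χ ((-c₁ + R * u)⁻¹)) *
                (χ ((-c₁ + R * u)⁻¹) * χ (-c₁ + R * u)) := by rw [g1, mul_one]
          _ = (χ ((-c₁ + R * u)⁻¹) * (starRingEnd ℂ) (χ ((-c₁ + R * u)⁻¹))) *
                χ (-c₁ + R * u) := by ring
          _ = χ (-c₁ + R * u) := by rw [g2, one_mul]
      simp only [map_mul, f3]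
      have f1 := chi_mul_conj χ hD
      have f4 : χ (-c₁ + R * u) * χ ((-c₁ + R * u)⁻¹) = 1 := by
        rw [← map_mul, ZMod.mul_inv_of_unit _ hb, map_one]
      calc χ (t + c₂ * u) * (starRingEnd ℂ) (χ (R * t + c₁ * c₂)) *
            (starRingEnd ℂ) (χ u) * χ (-c₁ + R * u)
          = (χ (t + c₂ * u) * (starRingEnd ℂ) (χ (R * t + c₁ * c₂)) *
              (starRingEnd ℂ) (χ u) * χ (-c₁ + R * u)) *
              ((χ (R * t + c₁ * c₂) * (starRingEnd ℂ) (χ (R * t + c₁ * c₂))) *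
               (χ (-c₁ + R * u) * χ ((-c₁ + R * u)⁻¹))) := by rw [f1, f4]; ring
        _ = ((starRingEnd ℂ) (χ (R * t + c₁ * c₂)) * (starRingEnd ℂ) (χ u) *
              χ (-c₁ + R * u)) * χ (R * t + c₁ * c₂) *
              (χ (t + c₂ * u) * χ ((-c₁ + R * u)⁻¹)) *
              ((starRingEnd ℂ) (χ (R * t + c₁ * c₂)) * χ (-c₁ + R * u)) := by ring
  · simp [MulChar.map_nonunit χ hD]

/-- For χ primitive modulo q, integers m₁, m₂, m₃ and a positive integer r coprime to q:
H_χ(m₁,m₂,m₃,r) = H_{conj(χ)}(m₂,m₁,m₃,r), where conj(χ) is the complex conjugate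
character. -/
theorem Hchi_symm_m1_m2 {q : ℕ} [NeZero q] (χ : DirichletCharacter ℂ q)
    (hχ : χ.IsPrimitive) (m₁ m₂ m₃ : ℤ) (r : ℤ) (hr : 0 < r)
    (hrq : Int.gcd r (q : ℤ) = 1) :
    Hchi χ m₁ m₂ m₃ r = Hchi (χ.ringHomComp (starRingEnd ℂ)) m₂ m₁ m₃ r := by
  unfold Hchi
  refine Finset.sum_congr rfl fun t _ => ?_
  rw [← Finset.sum_mul, ← Finset.sum_mul]
  congr 1
  have key := HchiInnerSum χ ((r : ℤ) : ZMod q) ((m₁ : ℤ) : ZMod q) ((m₂ : ℤ) : ZMod q) t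
  have c12 : ((m₁ * m₂ : ℤ) : ZMod q) = ((m₁ : ℤ) : ZMod q) * ((m₂ : ℤ) : ZMod q) := by
    push_cast; ring
  have c21 : ((m₂ * m₁ : ℤ) : ZMod q) = ((m₁ : ℤ) : ZMod q) * ((m₂ : ℤ) : ZMod q) := by
    push_cast; ring
  rw [c12, c21] at *
  simp only [MulChar.ringHomComp_apply, Complex.conj_conj]
  exact key
end

section
/- Let χ be a primitive Dirichlet character modulo q, let m₁, m₂, m₃ be integers, and let r be a positive integer with gcd(r, q) = 1, with inverse r̄ ∈ ℤ/qℤ. Then H_χ(m₁, m₂, m₃, r) = e_q(−m₁·m₂·m₃·(r̄)̃) · ∑_{t,u ∈ ℤ/qℤ} χ(t + m₂) · conj(χ)(t) · conj(χ)(u + m₁) · χ(u) · e_q(m₃·(r̄·u·t)̃), where (r̄)̃ and (r̄·u·t)̃ ∈ {0,…,q−1} are the representatives of r̄ and of the product r̄·u·t in ℤ/qℤ. -/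
/-!
Two changes of variables. Translating `t` by `r̄m₁m₂` and substituting `u = r̄(v + m₁)` removes
the constant `m₁m₂` from the second factor and extracts the phase `e_q(−r̄m₁m₂m₃)`. Then, for
each unit `v`, substituting `s = r̄vt` splits off `|χ(r̄v)|² = 1`, while a non-unit `v`
contributes nothing because `χ(v) = 0`.
-/

open ComplexConjugate

namespace MulChar

variable {R : Type*} [CommRing R]

lemma conj_apply_mul_apply [Finite Rˣ] (χ : MulChar R ℂ) {a : R} (ha : IsUnit a) :
    conj (χ a) * χ a = 1 := by
  rw [← RCLike.star_def, star_apply', ← mul_apply, inv_mul, one_apply ha]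

variable [Fintype R]

lemma sum_apply_add_mul_conj_apply_of_isUnit (χ : MulChar R ℂ) {a : R} (ha : IsUnit a) (b : R)
    (F : R → ℂ) :
    ∑ s, χ (s + a * b) * conj (χ s) * F s = ∑ t, χ (t + b) * conj (χ t) * F (a * t) := by
  rw [← Equiv.sum_comp (Units.mulLeft ha.unit)]
  refine Fintype.sum_congr _ _ fun t => ?_
  simp only [Units.mulLeft_apply, IsUnit.unit_spec, ← mul_add, map_mul]
  linear_combination χ (t + b) * conj (χ t) * F (a * t) * χ.conj_apply_mul_apply ha

variable (χ : MulChar R ℂ) (ψ : AddChar R ℂ)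

lemma sum_sum_translate {r r' : R} (h : r * r' = 1) (a b : R) :
    ∑ t, ∑ u, χ (t + b * u) * conj (χ (r * t + a * b)) * conj (χ u) * χ (-a + r * u) * ψ t =
      ψ (-(r' * a * b)) *
        ∑ s, ∑ v, χ (s + r' * b * v) * conj (χ s) * conj (χ (v + a)) * χ v * ψ s := by
  have hr' : IsUnit r' := .of_mul_eq_one_right r h
  rw [← Equiv.sum_comp (Equiv.subRight (r' * a * b)), Finset.mul_sum]
  refine Fintype.sum_congr _ _ fun s => ?_
  rw [← Equiv.sum_comp ((Equiv.addRight a).trans (Units.mulLeft hr'.unit)), Finset.mul_sum]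
  refine Fintype.sum_congr _ _ fun v => ?_
  simp only [Equiv.subRight_apply, Equiv.trans_apply, Equiv.coe_addRight, Units.mulLeft_apply,
    IsUnit.unit_spec]
  have h₁ : s - r' * a * b + b * (r' * (v + a)) = s + r' * b * v := by ring
  have h₂ : r * (s - r' * a * b) + a * b = r * s := by linear_combination (-(a * b)) * h
  have h₃ : -a + r * (r' * (v + a)) = v := by linear_combination (v + a) * h
  have hconj : conj (χ r) * conj (χ r') = 1 := by rw [← map_mul, ← map_mul, h, map_one, map_one]
  rw [h₁, h₂, h₃, sub_eq_neg_add, AddChar.map_add_eq_mul, map_mul, map_mul, map_mul, map_mul]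
  linear_combination ψ (-(r' * a * b)) * χ (s + r' * b * v) * conj (χ s) * conj (χ (v + a)) *
    χ v * ψ s * hconj

lemma sum_sum_rescale {r' : R} (hr' : IsUnit r') (a b : R) :
    ∑ s, ∑ v, χ (s + r' * b * v) * conj (χ s) * conj (χ (v + a)) * χ v * ψ s =
      ∑ t, ∑ u, χ (t + b) * conj (χ t) * conj (χ (u + a)) * χ u * ψ (r' * u * t) := by
  rw [Finset.sum_comm]
  conv_rhs => rw [Finset.sum_comm]
  refine Fintype.sum_congr _ _ fun v => ?_
  by_cases hv : IsUnit v
  · calc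
      _ = ∑ s, χ (s + r' * v * b) * conj (χ s) * (conj (χ (v + a)) * χ v * ψ s) :=
        Fintype.sum_congr _ _ fun s => by ring_nf
      _ = ∑ t, χ (t + b) * conj (χ t) * (conj (χ (v + a)) * χ v * ψ (r' * v * t)) :=
        χ.sum_apply_add_mul_conj_apply_of_isUnit (hr'.mul hv) b _
      _ = _ := Fintype.sum_congr _ _ fun t => by ring
  · simp [χ.map_nonunit hv]

lemma sum_sum_eq_addChar_mul_sum_sum {r r' : R} (h : r * r' = 1) (a b : R) :
    ∑ t, ∑ u, χ (t + b * u) * conj (χ (r * t + a * b)) * conj (χ u) * χ (-a + r * u) * ψ t =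
      ψ (-(r' * a * b)) *
        ∑ t, ∑ u, χ (t + b) * conj (χ t) * conj (χ (u + a)) * χ u * ψ (r' * u * t) := by
  rw [sum_sum_translate χ ψ h, sum_sum_rescale χ ψ (.of_mul_eq_one_right r h)]

end MulChar

lemma eN_mul_val {q : ℕ} [NeZero q] (m : ℤ) (x : ZMod q) :
    eN q (m * (x.val : ℤ)) = ZMod.stdAddChar ((m : ZMod q) * x) := by
  rw [eN, ← ZMod.stdAddChar_coe, Int.cast_mul, Int.cast_natCast, ZMod.natCast_zmod_val]

theorem Hchi_eval_coprime_general {q : ℕ} [NeZero q] (χ : DirichletCharacter ℂ q)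
    (m₁ m₂ m₃ : ℤ) (r : ℤ) (hrq : Int.gcd r (q : ℤ) = 1) :
    Hchi χ m₁ m₂ m₃ r =
      eN q (-(m₁ * m₂ * m₃) * ((((r : ZMod q))⁻¹).val : ℤ)) *
        ∑ t : ZMod q, ∑ u : ZMod q,
          χ (t + (m₂ : ZMod q)) * (starRingEnd ℂ) (χ t) *
            (starRingEnd ℂ) (χ (u + (m₁ : ZMod q))) * χ u *
            eN q (m₃ * (((((r : ZMod q))⁻¹ * u * t)).val : ℤ)) := by
  have hr : IsUnit (r : ZMod q) := (ZMod.coe_int_isUnit_iff_isCoprime r q).mpr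
    (Int.isCoprime_iff_gcd_eq_one.mpr (by rwa [Int.gcd_comm]))
  have key := MulChar.sum_sum_eq_addChar_mul_sum_sum χ (ZMod.stdAddChar.mulShift m₃)
    (ZMod.mul_inv_of_unit _ hr) (m₁ : ZMod q) m₂
  simp only [AddChar.mulShift_apply] at key
  simp only [Hchi, eN_mul_val]
  push_cast
  rw [key]
  congr 2
  ring

/-- For χ primitive modulo q, integers m₁, m₂, m₃, and a positive integer r coprime to q
with inverse r̄ in ℤ/qℤ:
H_χ(m₁,m₂,m₃,r) = e_q(−m₁m₂m₃·(r̄)̃) · ∑_{t,u} χ(t+m₂)·conj(χ)(t)·conj(χ)(u+m₁)·χ(u)·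
e_q(m₃·(r̄ut)̃). -/
theorem Hchi_eval_coprime {q : ℕ} [NeZero q] (χ : DirichletCharacter ℂ q)
    (hχ : χ.IsPrimitive) (m₁ m₂ m₃ : ℤ) (r : ℤ) (hr : 0 < r)
    (hrq : Int.gcd r (q : ℤ) = 1) :
    Hchi χ m₁ m₂ m₃ r =
      eN q (-(m₁ * m₂ * m₃) * ((((r : ZMod q))⁻¹).val : ℤ)) *
        ∑ t : ZMod q, ∑ u : ZMod q,
          χ (t + (m₂ : ZMod q)) * (starRingEnd ℂ) (χ t) *
            (starRingEnd ℂ) (χ (u + (m₁ : ZMod q))) * χ u *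
            eN q (m₃ * (((((r : ZMod q))⁻¹ * u * t)).val : ℤ)) :=
  Hchi_eval_coprime_general χ m₁ m₂ m₃ r hrq
end
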